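/- arXiv:2410.11347 — 9 statements merged into one kernel-verified Lean document; each statement's English description precedes it below -/
import Mathlib

section
/- Let m be a prime, let s_0, …, s_{m−1} be independent random variables each uniform on {−1,1} (indexed by F_m = ℤ/mℤ), and let u ∈ F_m be nonzero. Then the random variables X_{x,u} = s_x · s_{x+u}, for x ranging over F_m \ {0}, are mutually independent. -/
/-!
Walking backwards along the orbit `0, -u, -2u, …` of the shift, which exhausts `F_m` because `m`
is prime, a sign sequence `s` is recovered from `s_0` and the bits `[s_x = s_{x+u}]` for `x ≠ 0`.
So `s ↦ (s_0, ([s_x = s_{x+u}])_{x ≠ 0})` is a bijection onto `{±1} × {0,1}^{F_m ∖ {0}}`, which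
pushes the uniform measure to the uniform one; the bits are therefore independent fair coins, and
`X_{x,u} = s_x s_{x+u}` is `±1` according to the bit.
-/

open MeasureTheory ProbabilityTheory Real Finset
open scoped ENNReal

/-- The sign sequence associated to a Boolean sequence: `s_i = ±1`. -/
noncomputable def sgn {m : ℕ} (ω : ZMod m → Bool) (i : ZMod m) : ℝ :=
  if ω i then 1 else -1

/-- Autocorrelation at shift `u`: `C_u(S) = ∑_{i ∈ F_m} s_i s_{i+u}`. -/
noncomputable def corr (m : ℕ) [NeZero m] (u : ZMod m) (ω : ZMod m → Bool) : ℝ :=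
  ∑ i : ZMod m, sgn ω i * sgn ω (i + u)

/-- Periodic autocorrelation: `C(S) = max_{u ≠ 0} |C_u(S)|`. -/
noncomputable def pac (m : ℕ) [NeZero m] (ω : ZMod m → Bool) : ℝ :=
  ⨆ u : {u : ZMod m // u ≠ 0}, |corr m u ω|

/-- The uniform probability measure on `{−1,1}^m`, encoded via Boolean sequences. -/
noncomputable def unif (m : ℕ) [NeZero m] : Measure (ZMod m → Bool) :=
  (PMF.uniformOfFintype (ZMod m → Bool)).toMeasure

namespace PMF

theorem map_uniformOfFintype_snd_of_equiv {α β γ : Type*} [Fintype α] [Fintype β] [Fintype γ]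
    [Nonempty α] [Nonempty γ] (e : α ≃ β × γ) :
    (uniformOfFintype α).map (fun a => (e a).2) = uniformOfFintype γ := by
  classical
  have hcard : (Fintype.card α : ℝ≥0∞) = Fintype.card β * Fintype.card γ := by
    rw [Fintype.card_congr e, Fintype.card_prod, Nat.cast_mul]
  have hβ : (Fintype.card β : ℝ≥0∞) ≠ 0 := by
    have : Nonempty β := ⟨(e (Classical.arbitrary α)).1⟩
    exact_mod_cast Fintype.card_ne_zero
  ext c
  rw [map_apply, tsum_fintype, ← e.symm.sum_comp, Fintype.sum_prod_type]
  simp only [uniformOfFintype_apply, Equiv.apply_symm_apply, Finset.sum_ite_eq,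
    Finset.mem_univ, if_true, Finset.sum_const, Finset.card_univ, nsmul_eq_mul, hcard]
  rw [ENNReal.mul_inv (Or.inl hβ) (Or.inl (ENNReal.natCast_ne_top _)), ← mul_assoc,
    ENNReal.mul_inv_cancel hβ (ENNReal.natCast_ne_top _), one_mul]

theorem toMeasure_uniformOfFintype_pi {ι : Type*} [Fintype ι] [DecidableEq ι] {β : ι → Type*}
    [∀ i, Fintype (β i)] [∀ i, Nonempty (β i)] [∀ i, MeasurableSpace (β i)]
    [∀ i, MeasurableSingletonClass (β i)] :
    (uniformOfFintype (∀ i, β i)).toMeasure =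
      Measure.pi fun i => (uniformOfFintype (β i)).toMeasure := by
  refine Measure.ext_of_singleton fun b => ?_
  simp only [Measure.pi_singleton, toMeasure_apply_singleton _ _ (measurableSet_singleton _),
    uniformOfFintype_apply, Fintype.card_pi, Nat.cast_prod]
  exact ENNReal.prod_inv_distrib fun i _ j _ _ => Or.inr (ENNReal.natCast_ne_top _)

end PMF

theorem iIndepFun_of_map_eq_pi {Ω ι : Type*} [MeasurableSpace Ω] {μ : Measure Ω}
    [IsProbabilityMeasure μ] [Fintype ι] {β : ι → Type*} [∀ i, MeasurableSpace (β i)]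
    {ν : ∀ i, Measure (β i)} [∀ i, IsProbabilityMeasure (ν i)] {X : Ω → ∀ i, β i}
    (hX : Measurable X) (h : μ.map X = Measure.pi ν) :
    iIndepFun (fun i ω => X ω i) μ := by
  have hXi : ∀ i, μ.map (fun ω => X ω i) = ν i := fun i => by
    rw [← (measurePreserving_eval ν i).map_eq, ← h, Measure.map_map (measurable_pi_apply i) hX]
    rfl
  refine (iIndepFun_iff_map_fun_eq_pi_map
    fun i => ((measurable_pi_apply i).comp hX).aemeasurable).2 ?_
  simp only [Function.comp_def, hXi]
  exact h

section ShiftAgreement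

variable {G : Type*} [AddGroup G] {u : G}

def shiftAgreement (u : G) (ω : G → Bool) : {x : G // x ≠ 0} → Bool :=
  fun x => ω x == ω (x + u)

theorem eq_of_shiftAgreement_eq [Finite G] (hu : ∀ z, z ∈ AddSubgroup.zmultiples u)
    {ω ω' : G → Bool} (h0 : ω 0 = ω' 0) (h : shiftAgreement u ω = shiftAgreement u ω') :
    ω = ω' := by
  have step : ∀ z, ω z = ω' z → ω (z - u) = ω' (z - u) := by
    intro z hz
    by_cases hzu : z - u = 0
    · rw [hzu]; exact h0
    · have := congrFun h ⟨z - u, hzu⟩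
      simp only [shiftAgreement, sub_add_cancel, hz] at this
      revert this; cases ω (z - u) <;> cases ω' (z - u) <;> cases ω' z <;> decide
  have on_multiples : ∀ n : ℕ, ω (n • -u) = ω' (n • -u) := by
    intro n
    induction n with
    | zero => simpa using h0
    | succ n ih => rw [succ_nsmul, ← sub_eq_add_neg]; exact step _ ih
  funext z
  obtain ⟨n, rfl⟩ : z ∈ AddSubmonoid.multiples (-u) := by
    rw [mem_multiples_iff_mem_zmultiples, AddSubgroup.zmultiples_neg]
    exact hu z
  exact on_multiples n

theorem bijective_apply_zero_prod_shiftAgreement [Fintype G]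
    (hu : ∀ z, z ∈ AddSubgroup.zmultiples u) :
    Function.Bijective fun ω : G → Bool => (ω 0, shiftAgreement u ω) := by
  classical
  refine (Fintype.bijective_iff_injective_and_card _).mpr ⟨fun ω ω' h => ?_, ?_⟩
  · exact eq_of_shiftAgreement_eq hu (congrArg Prod.fst h) (congrArg Prod.snd h)
  · exact Fintype.card_congr <| (Equiv.piEquivPiSubtypeProd (· = (0 : G)) _).trans
      (Equiv.prodCongr (Equiv.funUnique _ _) (Equiv.refl _))

theorem map_shiftAgreement_uniformOfFintype [Fintype G] [DecidableEq G]
    (hu : ∀ z, z ∈ AddSubgroup.zmultiples u) :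
    (PMF.uniformOfFintype (G → Bool)).toMeasure.map (shiftAgreement u) =
      Measure.pi fun _ => (PMF.uniformOfFintype Bool).toMeasure := by
  rw [PMF.toMeasure_map _ _ (measurable_of_countable _), ← PMF.toMeasure_uniformOfFintype_pi,
    ← PMF.map_uniformOfFintype_snd_of_equiv
      (Equiv.ofBijective _ (bijective_apply_zero_prod_shiftAgreement hu))]
  rfl

theorem iIndepFun_shiftAgreement [Fintype G] [DecidableEq G]
    (hu : ∀ z, z ∈ AddSubgroup.zmultiples u) :
    iIndepFun (fun x ω => shiftAgreement u ω x) (PMF.uniformOfFintype (G → Bool)).toMeasure :=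
  iIndepFun_of_map_eq_pi (measurable_of_countable _) (map_shiftAgreement_uniformOfFintype hu)

end ShiftAgreement

theorem sgn_mul_sgn {m : ℕ} (ω : ZMod m → Bool) (i j : ZMod m) :
    sgn ω i * sgn ω j = if ω i == ω j then 1 else -1 := by
  unfold sgn; cases ω i <;> cases ω j <;> norm_num

/-- For `m` prime and `u ≠ 0`, the random variables `X_{x,u} = s_x s_{x+u}`,
for `x` ranging over the nonzero elements of `F_m`, are mutually independent. -/
theorem stmt_2 (m : ℕ) [Fact (Nat.Prime m)] (u : ZMod m) (hu : u ≠ 0) :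
    iIndepFun
      (fun x : {x : ZMod m // x ≠ 0} => fun ω : ZMod m → Bool => sgn ω x.val * sgn ω (x.val + u))
      (unif m) := by
  have hgen : ∀ z : ZMod m, z ∈ AddSubgroup.zmultiples u :=
    fun z => mem_zmultiples_of_prime_card (Nat.card_zmod m) hu
  have hsgn : (fun (x : {x : ZMod m // x ≠ 0}) (ω : ZMod m → Bool) =>
      sgn ω x.val * sgn ω (x.val + u)) =
      fun x => (fun b : Bool => if b then (1 : ℝ) else -1) ∘
        fun ω : ZMod m → Bool => shiftAgreement u ω x := by
    funext x ω
    exact sgn_mul_sgn ω _ _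
  rw [hsgn]
  exact (iIndepFun_shiftAgreement hgen).comp _ fun _ => measurable_of_countable _
end

section
/- Let S_m be a uniformly random sequence in {−1,1}^m for m prime. For every ε > 0, P( C(S_m)/√(2m·log m) > 1 + ε ) → 0 as m tends to infinity through the primes. -/
open MeasureTheory ProbabilityTheory Real Finset

/-- partial correlation at shift 1, dropping the wrap-around term at `i = -1`. -/
noncomputable def pcorr (m : ℕ) [NeZero m] (ω : ZMod m → Bool) : ℝ :=
  ∑ i ∈ (univ : Finset (ZMod m)).erase (-1), sgn ω i * sgn ω (i + 1)

/-- The transfer bijection: records the first-difference pattern of `ω` along the cycle. -/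
def psi (m : ℕ) [NeZero m] (ω : ZMod m → Bool) : ZMod m → Bool :=
  fun i => if i = -1 then ω (-1) else (ω i == ω (i + 1))

lemma sum_pi_prod {m : ℕ} [NeZero m] (A : Finset (ZMod m)) (g : Bool → ℝ) :
    ∑ ω : ZMod m → Bool, ∏ i ∈ A, g (ω i)
      = (g true + g false) ^ A.card * 2 ^ (m - A.card) := by
  classical
  have h1 : ∀ ω : ZMod m → Bool, ∏ i ∈ A, g (ω i)
      = ∏ i : ZMod m, (if i ∈ A then g (ω i) else 1) := by
    intro ω
    rw [Finset.prod_ite_mem, Finset.univ_inter]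
  simp_rw [h1]
  rw [← Fintype.prod_sum (f := fun i b => if i ∈ A then g b else 1)]
  have h2 : ∀ i : ZMod m, (∑ b : Bool, if i ∈ A then g b else 1)
      = if i ∈ A then g true + g false else 2 := by
    intro i; by_cases h : i ∈ A <;> simp [h, Fintype.sum_bool]
  simp_rw [h2]
  rw [← Finset.prod_mul_prod_compl A]
  rw [Finset.prod_congr rfl (fun i hi => if_pos hi),
      Finset.prod_congr rfl (fun i (hi : i ∈ Aᶜ) => if_neg (Finset.mem_compl.1 hi)),
      Finset.prod_const, Finset.prod_const, Finset.card_compl, ZMod.card]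

lemma psi_inj (m : ℕ) [NeZero m] : Function.Injective (psi m) := by
  intro ω ω' h
  have bc : ∀ a b c : Bool, ((a == b) = (c == b)) → a = c := by decide
  have key : ∀ k : ℕ, ω (-1 - k) = ω' (-1 - k) := by
    intro k; induction k with
    | zero =>
      have := congrFun h (-1)
      simpa [psi] using this
    | succ k ih =>
      by_cases hk : ((-1 : ZMod m) - ((k:ℕ)+1 : ℕ)) = -1
      · rw [hk]
        have := congrFun h (-1); simpa [psi] using this
      · have h2 := congrFun h ((-1 : ZMod m) - ((k:ℕ)+1 : ℕ))
        simp only [psi, if_neg hk] at h2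
        have e : (-1 : ZMod m) - ((k:ℕ)+1 : ℕ) + 1 = -1 - k := by push_cast; ring
        rw [e, ih] at h2
        exact bc _ _ _ h2
  funext i
  obtain ⟨k, hk⟩ : ∃ k : ℕ, (k : ZMod m) = -1 - i := ⟨((-1 : ZMod m) - i).val, ZMod.natCast_rightInverse _⟩
  have : (-1 : ZMod m) - k = i := by rw [hk]; ring
  rw [← this]; exact key k

lemma sum_exp_pcorr (m : ℕ) [NeZero m] (l : ℝ) :
    ∑ ω : ZMod m → Bool, Real.exp (l * pcorr m ω)
      = 2 * (Real.exp l + Real.exp (-l)) ^ (m - 1) := by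
  classical
  set A : Finset (ZMod m) := (univ : Finset (ZMod m)).erase (-1) with hA
  set g : Bool → ℝ := fun b => Real.exp (l * (if b then (1:ℝ) else -1)) with hg
  have step1 : ∀ ω : ZMod m → Bool, Real.exp (l * pcorr m ω) = ∏ i ∈ A, g (psi m ω i) := by
    intro ω
    rw [pcorr, Finset.mul_sum, Real.exp_sum]
    refine Finset.prod_congr rfl fun i hi => ?_
    have hne : i ≠ -1 := (Finset.mem_erase.1 hi).1
    have : psi m ω i = (ω i == ω (i + 1)) := if_neg hne
    rw [this, hg]
    cases h1 : ω i <;> cases h2 : ω (i + 1) <;> simp [sgn, h1, h2]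
  simp_rw [step1]
  have step2 : ∑ ω : ZMod m → Bool, ∏ i ∈ A, g (psi m ω i)
      = ∑ ω : ZMod m → Bool, ∏ i ∈ A, g (ω i) := by
    exact Function.Bijective.sum_comp
      (Finite.injective_iff_bijective.1 (psi_inj m)) (fun ω => ∏ i ∈ A, g (ω i))
  rw [step2, sum_pi_prod A g]
  have hcard : A.card = m - 1 := by
    rw [hA, Finset.card_erase_of_mem (Finset.mem_univ _), Finset.card_univ, ZMod.card]
  have hm1 : 1 ≤ m := Nat.one_le_iff_ne_zero.2 (NeZero.ne m)
  rw [hcard]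
  have : m - (m - 1) = 1 := by omega
  rw [this]
  simp [hg, mul_comm]

lemma count_chernoff (m : ℕ) [NeZero m] (hm : 2 ≤ m) (a : ℝ) (ha : 0 ≤ a)
    (s : ℝ) (hs : s = 1 ∨ s = -1) :
    (((univ : Finset (ZMod m → Bool)).filter fun ω => a < s * pcorr m ω).card : ℝ)
      ≤ 2 ^ m * Real.exp (-a ^ 2 / (2 * ((m : ℝ) - 1))) := by
  classical
  have hM : (0:ℝ) < (m:ℝ) - 1 := by
    have : (2:ℝ) ≤ m := by exact_mod_cast hm
    linarith
  set l : ℝ := a / ((m:ℝ) - 1) with hl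
  have hl0 : 0 ≤ l := div_nonneg ha hM.le
  set F : Finset (ZMod m → Bool) := (univ : Finset (ZMod m → Bool)).filter
    fun ω => a < s * pcorr m ω with hF
  have key : (F.card : ℝ) * Real.exp (l * a) ≤ ∑ ω : ZMod m → Bool, Real.exp ((l*s) * pcorr m ω) := by
    calc (F.card : ℝ) * Real.exp (l * a) = ∑ _ω ∈ F, Real.exp (l * a) := by
          rw [Finset.sum_const, nsmul_eq_mul]
      _ ≤ ∑ ω ∈ F, Real.exp ((l*s) * pcorr m ω) := by
          refine Finset.sum_le_sum fun ω hω => ?_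
          have hω' : a < s * pcorr m ω := (Finset.mem_filter.1 hω).2
          have : l * a ≤ (l*s) * pcorr m ω := by
            have := mul_le_mul_of_nonneg_left hω'.le hl0
            nlinarith
          exact Real.exp_le_exp.2 this
      _ ≤ ∑ ω : ZMod m → Bool, Real.exp ((l*s) * pcorr m ω) := by
          refine Finset.sum_le_sum_of_subset_of_nonneg (Finset.filter_subset _ _)
            (fun ω _ _ => (Real.exp_pos _).le)
  rw [sum_exp_pcorr m (l*s)] at key
  have hcosh : Real.exp (l*s) + Real.exp (-(l*s)) ≤ 2 * Real.exp (l^2/2) := by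
    have h1 : Real.exp (l*s) + Real.exp (-(l*s)) = 2 * Real.cosh (l*s) := by
      rw [Real.cosh_eq]; ring
    have h2 : Real.cosh (l*s) ≤ Real.exp ((l*s)^2/2) := Real.cosh_le_exp_half_sq _
    have h3 : (l*s)^2 = l^2 := by rcases hs with h | h <;> rw [h] <;> ring
    rw [h1]
    rw [h3] at h2
    linarith
  have hexp2 : (2 : ℝ) * (Real.exp (l*s) + Real.exp (-(l*s))) ^ (m-1)
      ≤ 2 * (2 * Real.exp (l^2/2)) ^ (m-1) := by
    gcongr
  have hpow : (2 : ℝ) * (2 * Real.exp (l^2/2)) ^ (m-1)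
      = 2^m * Real.exp (((m:ℝ)-1) * (l^2/2)) := by
    rw [mul_pow, ← Real.exp_nat_mul]
    have h4 : ((m-1 : ℕ) : ℝ) = (m:ℝ) - 1 := by
      have : (1:ℕ) ≤ m := by omega
      push_cast [this]; ring
    rw [h4]
    have h5 : (2:ℝ) * 2 ^ (m-1) = 2^m := by
      rw [← pow_succ']
      congr 1; omega
    rw [← mul_assoc, h5]
  have key2 : (F.card : ℝ) * Real.exp (l * a) ≤ 2^m * Real.exp (((m:ℝ)-1) * (l^2/2)) := by
    rw [← hpow]; exact key.trans hexp2
  have harith : ((m:ℝ)-1) * (l^2/2) - l * a = -a^2 / (2 * ((m:ℝ)-1)) := by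
    rw [hl]; field_simp; ring
  calc (F.card : ℝ) = (F.card : ℝ) * Real.exp (l*a) / Real.exp (l*a) := by
          field_simp
    _ ≤ (2^m * Real.exp (((m:ℝ)-1) * (l^2/2))) / Real.exp (l*a) := by
          gcongr
    _ = 2^m * Real.exp (((m:ℝ)-1) * (l^2/2) - l * a) := by
          rw [Real.exp_sub]; ring
    _ = 2^m * Real.exp (-a^2 / (2 * ((m:ℝ)-1))) := by rw [harith]

lemma sgn_comp {m : ℕ} (ω : ZMod m → Bool) (e : ZMod m → ZMod m) (k : ZMod m) :
    sgn (ω ∘ e) k = sgn ω (e k) := rfl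

lemma corr_comp (m : ℕ) [Fact (Nat.Prime m)] (u : ZMod m) (hu : u ≠ 0) (ω : ZMod m → Bool) :
    corr m u ω = corr m 1 (ω ∘ fun k => k * u) := by
  have hbij : Function.Bijective (fun k : ZMod m => k * u) :=
    (Equiv.mulRight₀ u hu).bijective
  rw [corr, corr]
  refine (Fintype.sum_bijective _ hbij _ _ fun k => ?_).symm
  simp only [sgn_comp]
  congr 2
  ring

lemma card_corr_eq (m : ℕ) [Fact (Nat.Prime m)] (u : ZMod m) (hu : u ≠ 0) (P : ℝ → Prop)
    [DecidablePred P] :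
    ((univ : Finset (ZMod m → Bool)).filter fun ω => P (corr m u ω)).card
      = ((univ : Finset (ZMod m → Bool)).filter fun ω => P (corr m 1 ω)).card := by
  classical
  have e : ZMod m ≃ ZMod m := Equiv.mulRight₀ u hu
  refine Finset.card_bij' (fun ω _ => ω ∘ fun k => k * u)
    (fun ω _ => ω ∘ (Equiv.mulRight₀ u hu).symm) ?_ ?_ ?_ ?_
  · intro ω hω
    simp only [Finset.mem_filter, Finset.mem_univ, true_and] at hω ⊢
    rwa [← corr_comp m u hu]
  · intro ω hω
    simp only [Finset.mem_filter, Finset.mem_univ, true_and] at hω ⊢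
    rw [corr_comp m u hu]
    have : ((ω ∘ (Equiv.mulRight₀ u hu).symm) ∘ fun k => k * u) = ω := by
      funext k
      simp [Function.comp, mul_inv_cancel_right₀ hu]
    rwa [this]
  · intro ω _
    funext k; simp [Function.comp, inv_mul_cancel_right₀ hu]
  · intro ω _
    funext k; simp [Function.comp, mul_inv_cancel_right₀ hu]

lemma abs_corr_le (m : ℕ) [NeZero m] (ω : ZMod m → Bool) :
    |corr m 1 ω| ≤ |pcorr m ω| + 1 := by
  have hsplit : corr m 1 ω = sgn ω (-1) * sgn ω (-1 + 1) + pcorr m ω := by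
    rw [corr, pcorr, ← Finset.add_sum_erase _ _ (Finset.mem_univ (-1 : ZMod m))]
  rw [hsplit]
  have key : ∀ a b : Bool, |(if a then (1:ℝ) else -1) * (if b then 1 else -1)| = 1 := by
    intro a b; cases a <;> cases b <;> norm_num
  have h1 : |sgn ω (-1) * sgn ω (-1+1)| = 1 := key _ _
  calc |sgn ω (-1) * sgn ω (-1 + 1) + pcorr m ω|
      ≤ |sgn ω (-1) * sgn ω (-1+1)| + |pcorr m ω| := abs_add_le _ _
    _ = |pcorr m ω| + 1 := by rw [h1]; ring

lemma count_abs_corr (m : ℕ) [Fact (Nat.Prime m)] (u : ZMod m) (hu : u ≠ 0)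
    (a : ℝ) (ha : 0 ≤ a) :
    (((univ : Finset (ZMod m → Bool)).filter fun ω => a + 1 < |corr m u ω|).card : ℝ)
      ≤ 2 ^ (m+1) * Real.exp (-a ^ 2 / (2 * ((m : ℝ) - 1))) := by
  classical
  have hm : 2 ≤ m := (Fact.out : Nat.Prime m).two_le
  rw [card_corr_eq m u hu (fun x => a + 1 < |x|)]
  have hsub : ((univ : Finset (ZMod m → Bool)).filter fun ω => a + 1 < |corr m 1 ω|)
      ⊆ ((univ : Finset (ZMod m → Bool)).filter fun ω => a < 1 * pcorr m ω)
        ∪ ((univ : Finset (ZMod m → Bool)).filter fun ω => a < (-1) * pcorr m ω) := by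
    intro ω hω
    have h1 : a + 1 < |corr m 1 ω| := (Finset.mem_filter.1 hω).2
    have h2 : a < |pcorr m ω| := by
      have := abs_corr_le m ω
      linarith
    rcases lt_abs.1 h2 with h | h
    · exact Finset.mem_union_left _ (Finset.mem_filter.2 ⟨Finset.mem_univ _, by linarith⟩)
    · exact Finset.mem_union_right _ (Finset.mem_filter.2 ⟨Finset.mem_univ _, by linarith⟩)
  calc ((((univ : Finset (ZMod m → Bool)).filter fun ω => a + 1 < |corr m 1 ω|).card : ℕ) : ℝ)
      ≤ ((((univ : Finset (ZMod m → Bool)).filter fun ω => a < 1 * pcorr m ω)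
        ∪ ((univ : Finset (ZMod m → Bool)).filter fun ω => a < (-1) * pcorr m ω)).card : ℝ) := by
        exact_mod_cast Nat.cast_le.2 (Finset.card_le_card hsub)
    _ ≤ (((univ : Finset (ZMod m → Bool)).filter fun ω => a < 1 * pcorr m ω).card : ℝ)
        + (((univ : Finset (ZMod m → Bool)).filter fun ω => a < (-1) * pcorr m ω).card : ℝ) := by
        exact_mod_cast Finset.card_union_le _ _
    _ ≤ 2 ^ m * Real.exp (-a ^ 2 / (2 * ((m : ℝ) - 1)))
        + 2 ^ m * Real.exp (-a ^ 2 / (2 * ((m : ℝ) - 1))) := by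
        gcongr
        · exact count_chernoff m hm a ha 1 (Or.inl rfl)
        · exact count_chernoff m hm a ha (-1) (Or.inr rfl)
    _ = 2 ^ (m+1) * Real.exp (-a ^ 2 / (2 * ((m : ℝ) - 1))) := by
        rw [pow_succ]; ring

lemma count_pac (m : ℕ) [Fact (Nat.Prime m)] (a : ℝ) (ha : 0 ≤ a) :
    (((univ : Finset (ZMod m → Bool)).filter fun ω => a + 1 < pac m ω).card : ℝ)
      ≤ ((m : ℝ) - 1) * (2 ^ (m+1) * Real.exp (-a ^ 2 / (2 * ((m : ℝ) - 1)))) := by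
  classical
  have hsub : ((univ : Finset (ZMod m → Bool)).filter fun ω => a + 1 < pac m ω)
      ⊆ ((univ : Finset (ZMod m)).erase 0).biUnion
        (fun u => (univ : Finset (ZMod m → Bool)).filter fun ω => a + 1 < |corr m u ω|) := by
    intro ω hω
    have h1 : a + 1 < pac m ω := (Finset.mem_filter.1 hω).2
    haveI : Nonempty {u : ZMod m // u ≠ 0} := ⟨⟨1, one_ne_zero⟩⟩
    obtain ⟨⟨u, hu⟩, h2⟩ := exists_lt_of_lt_ciSup h1
    exact Finset.mem_biUnion.2 ⟨u, Finset.mem_erase.2 ⟨hu, Finset.mem_univ _⟩,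
      Finset.mem_filter.2 ⟨Finset.mem_univ _, h2⟩⟩
  have hcard := Finset.card_le_card hsub
  have hbi := Finset.card_biUnion_le (s := (univ : Finset (ZMod m)).erase 0)
    (t := fun u => (univ : Finset (ZMod m → Bool)).filter fun ω => a + 1 < |corr m u ω|)
  have hsum : (∑ u ∈ (univ : Finset (ZMod m)).erase 0,
      (((univ : Finset (ZMod m → Bool)).filter fun ω => a + 1 < |corr m u ω|).card : ℝ))
      ≤ ((m : ℝ) - 1) * (2 ^ (m+1) * Real.exp (-a ^ 2 / (2 * ((m : ℝ) - 1)))) := by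
    have hm : 2 ≤ m := (Fact.out : Nat.Prime m).two_le
    have hc : (((univ : Finset (ZMod m)).erase 0).card : ℝ) = (m : ℝ) - 1 := by
      rw [Finset.card_erase_of_mem (Finset.mem_univ _), Finset.card_univ, ZMod.card,
        Nat.cast_sub (by omega : 1 ≤ m), Nat.cast_one]
    calc (∑ u ∈ (univ : Finset (ZMod m)).erase 0,
        (((univ : Finset (ZMod m → Bool)).filter fun ω => a + 1 < |corr m u ω|).card : ℝ))
        ≤ ∑ _u ∈ (univ : Finset (ZMod m)).erase 0,
          (2 ^ (m+1) * Real.exp (-a ^ 2 / (2 * ((m : ℝ) - 1)))) := by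
          exact Finset.sum_le_sum fun u hu =>
            count_abs_corr m u (Finset.mem_erase.1 hu).1 a ha
      _ = ((m : ℝ) - 1) * (2 ^ (m+1) * Real.exp (-a ^ 2 / (2 * ((m : ℝ) - 1)))) := by
          rw [Finset.sum_const, nsmul_eq_mul, hc]
  calc (((univ : Finset (ZMod m → Bool)).filter fun ω => a + 1 < pac m ω).card : ℝ)
      ≤ ((((univ : Finset (ZMod m)).erase 0).biUnion
        (fun u => (univ : Finset (ZMod m → Bool)).filter fun ω => a + 1 < |corr m u ω|)).card : ℝ) := by
        exact_mod_cast hcard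
    _ ≤ (∑ u ∈ (univ : Finset (ZMod m)).erase 0,
        (((univ : Finset (ZMod m → Bool)).filter fun ω => a + 1 < |corr m u ω|).card : ℝ)) := by
        exact_mod_cast hbi
    _ ≤ ((m : ℝ) - 1) * (2 ^ (m+1) * Real.exp (-a ^ 2 / (2 * ((m : ℝ) - 1)))) := hsum

lemma unif_apply (m : ℕ) [NeZero m] (P : (ZMod m → Bool) → Prop) [DecidablePred P] :
    (unif m {ω | P ω}).toReal
      = (((univ : Finset (ZMod m → Bool)).filter P).card : ℝ) / 2 ^ m := by
  classical
  have hmeas : MeasurableSet {ω : ZMod m → Bool | P ω} :=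
    (Set.toFinite _).measurableSet
  rw [unif, PMF.toMeasure_uniformOfFintype_apply _ hmeas]
  rw [ENNReal.toReal_div]
  congr 1
  · rw [ENNReal.toReal_natCast]
    congr 1
    rw [← Set.toFinset_card, Set.toFinset_setOf]
  · rw [ENNReal.toReal_natCast, Fintype.card_fun]
    simp [ZMod.card]

/-- For every `ε > 0`, `P(C(S_m)/√(2m log m) > 1 + ε) → 0` as `m → ∞` through the primes. -/
theorem stmt_3 (ε : ℝ) (hε : 0 < ε) :
    ∀ δ > (0 : ℝ), ∃ M : ℕ, ∀ (m : ℕ) [Fact (Nat.Prime m)], M ≤ m →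
      (unif m {ω | pac m ω / Real.sqrt (2 * m * Real.log m) > 1 + ε}).toReal < δ := by
  intro δ hδ
  have h3 : ∀ᶠ (n : ℕ) in Filter.atTop, 3 ≤ n := Filter.eventually_atTop.2 ⟨3, fun n h => h⟩
  have h2 : ∀ᶠ (n : ℕ) in Filter.atTop, (2:ℝ)/ε ≤ Real.sqrt n := by
    refine Filter.eventually_atTop.2 ⟨⌈((2:ℝ)/ε)^2⌉₊, fun n hn => ?_⟩
    have h1 : ((2:ℝ)/ε)^2 ≤ n := le_trans (Nat.le_ceil _) (by exact_mod_cast hn)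
    calc (2:ℝ)/ε = Real.sqrt (((2:ℝ)/ε)^2) := (Real.sqrt_sq (by positivity)).symm
      _ ≤ Real.sqrt n := Real.sqrt_le_sqrt h1
  have hden : Filter.Tendsto (fun n : ℕ => 2 * (n:ℝ) ^ (-ε)) Filter.atTop (nhds 0) := by
    have h := (tendsto_rpow_neg_atTop hε).comp
      (tendsto_natCast_atTop_atTop (R := ℝ))
    simpa using h.const_mul 2
  have hsmall : ∀ᶠ (n : ℕ) in Filter.atTop, 2 * (n:ℝ) ^ (-ε) < δ :=
    hden.eventually_lt_const hδ
  obtain ⟨M, hM⟩ := Filter.eventually_atTop.1 ((h3.and h2).and hsmall)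
  refine ⟨M, fun m _ hm => ?_⟩
  classical
  obtain ⟨⟨hm3, hm2⟩, hmsmall⟩ := hM m hm
  have hm3' : (3:ℝ) ≤ m := by exact_mod_cast hm3
  have hmpos : (0:ℝ) < m := by linarith
  have hlog : 1 ≤ Real.log m := by
    rw [Real.le_log_iff_exp_le hmpos]
    have := Real.exp_one_lt_d9
    linarith
  set c : ℝ := Real.sqrt (2 * m * Real.log m) with hc
  have hc2 : c ^ 2 = 2 * m * Real.log m := Real.sq_sqrt (by nlinarith)
  have hcm : Real.sqrt m ≤ c := by
    apply Real.sqrt_le_sqrt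
    nlinarith
  have hc1 : 1 ≤ (ε/2) * c := by
    have h := hm2.trans hcm
    calc (1:ℝ) = (ε/2) * (2/ε) := by field_simp
      _ ≤ (ε/2) * c := by gcongr
  have hcpos : 0 < c := by nlinarith
  set a : ℝ := (1+ε)*c - 1 with ha
  have ha' : (1+ε/2)*c ≤ a := by nlinarith
  have ha0 : 0 ≤ a := by nlinarith
  have hset : {ω : ZMod m → Bool | pac m ω / c > 1+ε} = {ω | a + 1 < pac m ω} := by
    ext ω
    simp only [Set.mem_setOf_eq, gt_iff_lt]
    rw [lt_div_iff₀ hcpos]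
    constructor <;> intro h <;> linarith
  rw [hset, unif_apply]
  have hcount := count_pac m a ha0
  have hE : Real.exp (-a ^ 2 / (2 * ((m : ℝ) - 1))) ≤ (m:ℝ) ^ (-(1+ε)) := by
    rw [Real.rpow_def_of_pos hmpos]
    apply Real.exp_le_exp.2
    rw [div_le_iff₀ (by linarith : (0:ℝ) < 2 * ((m:ℝ)-1))]
    have hA : (1+ε/2)^2 * (2 * m * Real.log m) ≤ a^2 := by
      have h0 : 0 ≤ (1+ε/2)*c := by positivity
      nlinarith
    nlinarith
  have hfinal : (((univ : Finset (ZMod m → Bool)).filter fun ω => a + 1 < pac m ω).card : ℝ) / 2 ^ m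
      ≤ 2 * (m:ℝ) ^ (-ε) := by
    have hstep : (((univ : Finset (ZMod m → Bool)).filter fun ω => a + 1 < pac m ω).card : ℝ) / 2 ^ m
        ≤ (((m : ℝ) - 1) * (2 ^ (m+1) * Real.exp (-a ^ 2 / (2 * ((m : ℝ) - 1))))) / 2 ^ m := by
      gcongr
    refine hstep.trans ?_
    have h2m : ((((m : ℝ) - 1) * (2 ^ (m+1) * Real.exp (-a ^ 2 / (2 * ((m : ℝ) - 1))))) / 2 ^ m)
        = 2 * ((m:ℝ)-1) * Real.exp (-a ^ 2 / (2 * ((m : ℝ) - 1))) := by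
      rw [pow_succ]
      field_simp
    rw [h2m]
    calc 2 * ((m:ℝ)-1) * Real.exp (-a ^ 2 / (2 * ((m : ℝ) - 1)))
        ≤ 2 * (m:ℝ) * ((m:ℝ) ^ (-(1+ε))) := by
          apply mul_le_mul (by linarith) hE (Real.exp_pos _).le (by positivity)
      _ = 2 * (m:ℝ) ^ (-ε) := by
          rw [mul_assoc]
          congr 1
          have he : (m:ℝ) ^ (-ε) = (m:ℝ) ^ ((1:ℝ) + (-(1+ε))) := by norm_num
          rw [he, Real.rpow_add hmpos, Real.rpow_one]
  exact lt_of_le_of_lt hfinal hmsmall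
end

section
/- Let m be a prime and S_m a uniformly random sequence in {−1,1}^m with periodic autocorrelation C(S_m). Then for every θ' > 4, P( |E(C(S_m)) − C(S_m)| ≥ θ' ) ≤ 2·exp( −(θ' − 4)²/(8(m−1)) ). -/
open MeasureTheory ProbabilityTheory Real Finset

namespace McDAux

/-- Sum over `Fin (n+1) → Bool` splits along the first coordinate. -/
lemma sum_split (n : ℕ) (F : (Fin (n + 1) → Bool) → ℝ) :
    ∑ ω, F ω = ∑ ω' : Fin n → Bool, (F (Fin.cons true ω') + F (Fin.cons false ω')) := by
  rw [← Equiv.sum_comp (Fin.consEquiv (fun _ => Bool)) F, Fintype.sum_prod_type,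
    Fintype.sum_bool]
  rw [← Finset.sum_add_distrib]
  rfl

/-- MGF bound for functions of independent Boolean variables with bounded differences 4. -/
lemma mgf_bound : ∀ (n : ℕ) (f : (Fin n → Bool) → ℝ) (l : ℝ),
    (∀ ω i b, |f ω - f (Function.update ω i b)| ≤ 4) →
    ∑ ω, Real.exp (l * (f ω - (∑ ω', f ω') / 2 ^ n)) ≤ 2 ^ n * Real.exp (2 * n * l ^ 2) := by
  intro n
  induction n with
  | zero =>
    intro f l _
    simp [Fintype.sum_unique]
  | succ n ih =>
    intro f l hf
    set ft : (Fin n → Bool) → ℝ := fun ω' => f (Fin.cons true ω') with hft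
    set ffl : (Fin n → Bool) → ℝ := fun ω' => f (Fin.cons false ω') with hffl
    set g : (Fin n → Bool) → ℝ := fun ω' => (ft ω' + ffl ω') / 2 with hg
    have hsum : ∑ ω, f ω = ∑ ω', (ft ω' + ffl ω') := sum_split n f
    have havg : (∑ ω, f ω) / 2 ^ (n + 1) = (∑ ω', g ω') / 2 ^ n := by
      rw [hsum]
      simp only [hg]
      rw [Finset.sum_div, Finset.sum_div]
      apply Finset.sum_congr rfl
      intro x _
      ring
    set A : ℝ := (∑ ω, f ω) / 2 ^ (n + 1) with hA
    have hgbd : ∀ ω' i b, |g ω' - g (Function.update ω' i b)| ≤ 4 := by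
      intro ω' i b
      have h1 : |ft ω' - ft (Function.update ω' i b)| ≤ 4 := by
        have := hf (Fin.cons true ω') i.succ b
        rwa [← Fin.cons_update] at this
      have h2 : |ffl ω' - ffl (Function.update ω' i b)| ≤ 4 := by
        have := hf (Fin.cons false ω') i.succ b
        rwa [← Fin.cons_update] at this
      have : g ω' - g (Function.update ω' i b) =
          ((ft ω' - ft (Function.update ω' i b)) + (ffl ω' - ffl (Function.update ω' i b))) / 2 := by
        simp only [hg]; ring
      rw [this]
      rw [abs_div]
      have := abs_add_le (ft ω' - ft (Function.update ω' i b)) (ffl ω' - ffl (Function.update ω' i b))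
      have h4 : |(2 : ℝ)| = 2 := by norm_num
      rw [h4]
      linarith
    have key : ∀ ω' : Fin n → Bool,
        Real.exp (l * (ft ω' - A)) + Real.exp (l * (ffl ω' - A)) ≤
          2 * Real.exp (2 * l ^ 2) * Real.exp (l * (g ω' - A)) := by
      intro ω'
      set d : ℝ := (ft ω' - ffl ω') / 2 with hd
      have hdbd : |d| ≤ 2 := by
        have : ffl ω' = f (Function.update (Fin.cons true ω') 0 false) := by
          rw [Fin.update_cons_zero]
        have h5 := hf (Fin.cons true ω') 0 false
        rw [← this] at h5
        rw [hd, abs_div]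
        have h4 : |(2 : ℝ)| = 2 := by norm_num
        rw [h4]
        have : ft ω' - ffl ω' = f (Fin.cons true ω') - ffl ω' := rfl
        rw [this]
        linarith
      have e1 : l * (ft ω' - A) = l * (g ω' - A) + l * d := by
        simp only [hg, hd]; ring
      have e2 : l * (ffl ω' - A) = l * (g ω' - A) + -(l * d) := by
        simp only [hg, hd]; ring
      rw [e1, e2, Real.exp_add, Real.exp_add, ← mul_add]
      have hcosh : Real.exp (l * d) + Real.exp (-(l * d)) ≤ 2 * Real.exp (2 * l ^ 2) := by
        have h6 : Real.cosh (l * d) ≤ Real.exp ((l * d) ^ 2 / 2) := Real.cosh_le_exp_half_sq _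
        have h7 : (l * d) ^ 2 / 2 ≤ 2 * l ^ 2 := by
          have : d ^ 2 ≤ 4 := by
            have := sq_abs d
            nlinarith [abs_nonneg d]
          nlinarith [sq_nonneg l]
        have h8 : Real.exp ((l * d) ^ 2 / 2) ≤ Real.exp (2 * l ^ 2) := Real.exp_le_exp.2 h7
        have h9 : Real.exp (l * d) + Real.exp (-(l * d)) = 2 * Real.cosh (l * d) := by
          rw [Real.cosh_eq]; ring
        rw [h9]
        linarith [Real.cosh_le_exp_half_sq (l * d)]
      have hpos : 0 < Real.exp (l * (g ω' - A)) := Real.exp_pos _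
      calc Real.exp (l * (g ω' - A)) * (Real.exp (l * d) + Real.exp (-(l * d)))
          ≤ Real.exp (l * (g ω' - A)) * (2 * Real.exp (2 * l ^ 2)) := by
            apply mul_le_mul_of_nonneg_left hcosh (le_of_lt hpos)
        _ = 2 * Real.exp (2 * l ^ 2) * Real.exp (l * (g ω' - A)) := by ring
    calc ∑ ω, Real.exp (l * (f ω - A))
        = ∑ ω', (Real.exp (l * (ft ω' - A)) + Real.exp (l * (ffl ω' - A))) := by
          rw [sum_split n (fun ω => Real.exp (l * (f ω - A)))]
      _ ≤ ∑ ω' : Fin n → Bool, 2 * Real.exp (2 * l ^ 2) * Real.exp (l * (g ω' - A)) :=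
          Finset.sum_le_sum fun ω' _ => key ω'
      _ = 2 * Real.exp (2 * l ^ 2) * ∑ ω', Real.exp (l * (g ω' - A)) := by
          rw [Finset.mul_sum]
      _ ≤ 2 * Real.exp (2 * l ^ 2) * (2 ^ n * Real.exp (2 * n * l ^ 2)) := by
          apply mul_le_mul_of_nonneg_left _ (by positivity)
          have := ih g l hgbd
          rwa [← havg] at this
      _ = 2 ^ (n + 1) * Real.exp (2 * (n + 1 : ℕ) * l ^ 2) := by
          have hexp : Real.exp (2 * ((n : ℝ) + 1) * l ^ 2) =
              Real.exp (2 * l ^ 2) * Real.exp (2 * (n : ℝ) * l ^ 2) := by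
            rw [← Real.exp_add]; ring_nf
          push_cast
          rw [hexp]; ring
end McDAux

namespace McDAux

lemma tail_upper (n : ℕ) (hn : 0 < n) (f : (Fin n → Bool) → ℝ)
    (hf : ∀ ω i b, |f ω - f (Function.update ω i b)| ≤ 4) (t : ℝ) (ht : 0 ≤ t) :
    ((Finset.univ.filter (fun ω => t ≤ f ω - (∑ ω', f ω') / 2 ^ n)).card : ℝ)
      ≤ 2 ^ n * Real.exp (-t ^ 2 / (8 * n)) := by
  classical
  set A := (∑ ω', f ω') / 2 ^ n with hA
  set l : ℝ := t / (4 * n) with hl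
  have hn' : (n : ℝ) ≠ 0 := Nat.cast_ne_zero.2 hn.ne'
  have hl0 : 0 ≤ l := by positivity
  set s := Finset.univ.filter (fun ω => t ≤ f ω - A) with hs
  have h1 : (s.card : ℝ) * Real.exp (l * t) ≤ ∑ ω, Real.exp (l * (f ω - A)) := by
    calc (s.card : ℝ) * Real.exp (l * t) = ∑ _ω ∈ s, Real.exp (l * t) := by
          rw [Finset.sum_const, nsmul_eq_mul]
      _ ≤ ∑ ω ∈ s, Real.exp (l * (f ω - A)) := by
          apply Finset.sum_le_sum
          intro ω hω
          apply Real.exp_le_exp.2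
          apply mul_le_mul_of_nonneg_left _ hl0
          exact (Finset.mem_filter.1 hω).2
      _ ≤ ∑ ω, Real.exp (l * (f ω - A)) := by
          apply Finset.sum_le_sum_of_subset_of_nonneg (Finset.filter_subset _ _)
          intro ω _ _
          exact (Real.exp_pos _).le
  have h2 := mgf_bound n f l hf
  rw [← hA] at h2
  have h3 : (s.card : ℝ) * Real.exp (l * t) ≤ 2 ^ n * Real.exp (2 * n * l ^ 2) :=
    le_trans h1 h2
  have h4 : (s.card : ℝ) ≤ 2 ^ n * Real.exp (2 * n * l ^ 2) / Real.exp (l * t) :=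
    (le_div_iff₀ (Real.exp_pos _)).2 h3
  have h5 : 2 * (n : ℝ) * l ^ 2 - l * t = -t ^ 2 / (8 * n) := by
    rw [hl]
    field_simp
    ring
  calc (s.card : ℝ) ≤ 2 ^ n * Real.exp (2 * n * l ^ 2) / Real.exp (l * t) := h4
    _ = 2 ^ n * Real.exp (2 * n * l ^ 2 - l * t) := by
        rw [Real.exp_sub]; ring
    _ = 2 ^ n * Real.exp (-t ^ 2 / (8 * n)) := by rw [h5]

lemma tail_two (n : ℕ) (hn : 0 < n) (f : (Fin n → Bool) → ℝ)
    (hf : ∀ ω i b, |f ω - f (Function.update ω i b)| ≤ 4) (t : ℝ) (ht : 0 ≤ t) :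
    ((Finset.univ.filter (fun ω => t ≤ |(∑ ω', f ω') / 2 ^ n - f ω|)).card : ℝ)
      ≤ 2 ^ n * (2 * Real.exp (-t ^ 2 / (8 * n))) := by
  classical
  set A := (∑ ω', f ω') / 2 ^ n with hA
  have hnegf : ∀ ω i b, |(-f) ω - (-f) (Function.update ω i b)| ≤ 4 := by
    intro ω i b
    simp only [Pi.neg_apply]
    rw [show -f ω - -f (Function.update ω i b) = -(f ω - f (Function.update ω i b)) by ring,
      abs_neg]
    exact hf ω i b
  have hAneg : (∑ ω', (-f) ω') / 2 ^ n = -A := by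
    rw [hA]
    simp [Finset.sum_neg_distrib, neg_div]
  have hsub : Finset.univ.filter (fun ω => t ≤ |A - f ω|) ⊆
      (Finset.univ.filter (fun ω => t ≤ f ω - A)) ∪
        (Finset.univ.filter (fun ω => t ≤ (-f) ω - (∑ ω', (-f) ω') / 2 ^ n)) := by
    intro ω hω
    have hω' := (Finset.mem_filter.1 hω).2
    rcases le_abs.1 hω' with h | h
    · apply Finset.mem_union_right
      rw [Finset.mem_filter]
      refine ⟨Finset.mem_univ _, ?_⟩
      rw [hAneg]
      simp only [Pi.neg_apply]
      linarith
    · apply Finset.mem_union_left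
      rw [Finset.mem_filter]
      exact ⟨Finset.mem_univ _, by linarith⟩
  have hcard := Finset.card_le_card hsub
  have hcard2 := Finset.card_union_le
    (Finset.univ.filter (fun ω => t ≤ f ω - A))
    (Finset.univ.filter (fun ω => t ≤ (-f) ω - (∑ ω', (-f) ω') / 2 ^ n))
  have b1 := tail_upper n hn f hf t ht
  have b2 := tail_upper n hn (-f) hnegf t ht
  rw [← hA] at b1
  have : ((Finset.univ.filter (fun ω => t ≤ |A - f ω|)).card : ℝ) ≤
      ((Finset.univ.filter (fun ω => t ≤ f ω - A)).card : ℝ) +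
      ((Finset.univ.filter (fun ω => t ≤ (-f) ω - (∑ ω', (-f) ω') / 2 ^ n)).card : ℝ) := by
    exact_mod_cast le_trans (Nat.cast_le.2 hcard) (Nat.cast_le.2 hcard2)
  calc ((Finset.univ.filter (fun ω => t ≤ |A - f ω|)).card : ℝ)
      ≤ _ + _ := this
    _ ≤ 2 ^ n * Real.exp (-t ^ 2 / (8 * n)) + 2 ^ n * Real.exp (-t ^ 2 / (8 * n)) :=
        add_le_add b1 b2
    _ = 2 ^ n * (2 * Real.exp (-t ^ 2 / (8 * n))) := by ring

end McDAux

namespace McDAux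

lemma abs_sgn {m : ℕ} (ω : ZMod m → Bool) (i : ZMod m) : |sgn ω i| = 1 := by
  unfold sgn; split <;> norm_num

lemma bdd_corr (m : ℕ) [NeZero m] (ω : ZMod m → Bool) :
    BddAbove (Set.range fun u : {u : ZMod m // u ≠ 0} => |corr m u ω|) :=
  Set.Finite.bddAbove (Set.finite_range _)

lemma corr_abs_le (m : ℕ) [NeZero m] (u : ZMod m) (ω : ZMod m → Bool) :
    |corr m u ω| ≤ m := by
  rw [corr]
  calc |∑ i : ZMod m, sgn ω i * sgn ω (i + u)| ≤ ∑ i : ZMod m, |sgn ω i * sgn ω (i + u)| :=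
        Finset.abs_sum_le_sum_abs _ _
    _ = ∑ _i : ZMod m, (1 : ℝ) := by
        apply Finset.sum_congr rfl
        intro i _
        rw [abs_mul, abs_sgn, abs_sgn, one_mul]
    _ = m := by
        rw [Finset.sum_const, nsmul_eq_mul, mul_one, Finset.card_univ, ZMod.card]

lemma corr_diff (m : ℕ) [NeZero m] (u : ZMod m) (hu : u ≠ 0) (ω : ZMod m → Bool)
    (j : ZMod m) (b : Bool) :
    |corr m u ω - corr m u (Function.update ω j b)| ≤ 4 := by
  classical
  set ω' := Function.update ω j b with hω'
  set h : ZMod m → ℝ := fun i => sgn ω i * sgn ω (i + u) - sgn ω' i * sgn ω' (i + u) with hh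
  have hsub : corr m u ω - corr m u ω' = ∑ i : ZMod m, h i := by
    rw [corr, corr, ← Finset.sum_sub_distrib]
  have habs : ∀ i, |h i| ≤ 2 := by
    intro i
    have h1 : |sgn ω i * sgn ω (i + u)| = 1 := by rw [abs_mul, abs_sgn, abs_sgn, one_mul]
    have h2 : |sgn ω' i * sgn ω' (i + u)| = 1 := by rw [abs_mul, abs_sgn, abs_sgn, one_mul]
    calc |h i| ≤ |sgn ω i * sgn ω (i + u)| + |sgn ω' i * sgn ω' (i + u)| := abs_sub _ _
      _ = 2 := by rw [h1, h2]; norm_num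
  have hvanish : ∀ i : ZMod m, i ∉ ({j, j - u} : Finset (ZMod m)) → h i = 0 := by
    intro i hi
    simp only [Finset.mem_insert, Finset.mem_singleton, not_or] at hi
    have hi1 : ω' i = ω i := Function.update_of_ne hi.1 _ _
    have hi2 : ω' (i + u) = ω (i + u) := by
      apply Function.update_of_ne _ _ _
      intro hc
      exact hi.2 (by rw [eq_sub_iff_add_eq, hc])
    simp only [hh, sgn, hi1, hi2, sub_self]
  have hrestrict : ∑ i : ZMod m, h i = ∑ i ∈ ({j, j - u} : Finset (ZMod m)), h i := by
    symm
    apply Finset.sum_subset (Finset.subset_univ _)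
    intro i _ hi
    exact hvanish i hi
  rw [hsub, hrestrict]
  calc |∑ i ∈ ({j, j - u} : Finset (ZMod m)), h i|
      ≤ ∑ i ∈ ({j, j - u} : Finset (ZMod m)), |h i| := Finset.abs_sum_le_sum_abs _ _
    _ ≤ ∑ _i ∈ ({j, j - u} : Finset (ZMod m)), (2 : ℝ) :=
        Finset.sum_le_sum fun i _ => habs i
    _ = (({j, j - u} : Finset (ZMod m)).card : ℝ) * 2 := by
        rw [Finset.sum_const, nsmul_eq_mul]
    _ ≤ 2 * 2 := by
        have : ({j, j - u} : Finset (ZMod m)).card ≤ 2 := by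
          apply le_trans (Finset.card_insert_le _ _)
          simp
        have h2 : (({j, j - u} : Finset (ZMod m)).card : ℝ) ≤ 2 := by exact_mod_cast this
        linarith
    _ = 4 := by norm_num

lemma pac_le_of (m : ℕ) [NeZero m] [Nonempty {u : ZMod m // u ≠ 0}]
    (ω ω' : ZMod m → Bool)
    (h : ∀ u : ZMod m, u ≠ 0 → |corr m u ω - corr m u ω'| ≤ 4) :
    pac m ω ≤ pac m ω' + 4 := by
  rw [pac]
  apply ciSup_le
  intro u
  have h1 : |corr m u ω| ≤ |corr m u ω'| + 4 := by
    have := abs_sub_abs_le_abs_sub (corr m u ω) (corr m u ω')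
    have h2 := h u u.2
    linarith
  have h2 : |corr m u ω'| ≤ pac m ω' := le_ciSup (bdd_corr m ω') u
  linarith

lemma pac_diff (m : ℕ) [NeZero m] [Nonempty {u : ZMod m // u ≠ 0}]
    (ω : ZMod m → Bool) (j : ZMod m) (b : Bool) :
    |pac m ω - pac m (Function.update ω j b)| ≤ 4 := by
  rw [abs_sub_le_iff]
  constructor
  · have := pac_le_of m ω (Function.update ω j b) (fun u hu => corr_diff m u hu ω j b)
    linarith
  · have := pac_le_of m (Function.update ω j b) ω
      (fun u hu => by rw [abs_sub_comm]; exact corr_diff m u hu ω j b)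
    linarith

lemma pac_nonneg (m : ℕ) [NeZero m] (u₀ : {u : ZMod m // u ≠ 0}) (ω : ZMod m → Bool) :
    0 ≤ pac m ω :=
  le_trans (abs_nonneg _) (le_ciSup (bdd_corr m ω) u₀)

lemma pac_le (m : ℕ) [NeZero m] [Nonempty {u : ZMod m // u ≠ 0}] (ω : ZMod m → Bool) :
    pac m ω ≤ m :=
  ciSup_le fun u => corr_abs_le m u ω

end McDAux


/-- For every `θ' > 4`,
`P(|E(C(S_m)) − C(S_m)| ≥ θ') ≤ 2 exp(−(θ'−4)²/(8(m−1)))`. -/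
theorem stmt_7 (m : ℕ) [Fact (Nat.Prime m)] (θ' : ℝ) (hθ' : 4 < θ') :
    (unif m {ω | |(∫ ω', pac m ω' ∂(unif m)) - pac m ω| ≥ θ'}).toReal ≤
      2 * Real.exp (-(θ' - 4) ^ 2 / (8 * ((m : ℝ) - 1))) := by
  classical
  have hm : m.Prime := Fact.out
  have hm2 : 2 ≤ m := hm.two_le
  haveI : Fact (1 < m) := ⟨hm.one_lt⟩
  haveI hne : Nonempty {u : ZMod m // u ≠ 0} := ⟨⟨1, one_ne_zero⟩⟩
  have hmpos : 0 < m := by omega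
  have hmR : (2 : ℝ) ≤ m := by exact_mod_cast hm2
  have hcardΩ : Fintype.card (ZMod m → Bool) = 2 ^ m := by
    rw [Fintype.card_fun, Fintype.card_bool, ZMod.card]
  set A : ℝ := (∑ ω : ZMod m → Bool, pac m ω) / 2 ^ m with hA
  have hint : (∫ ω', pac m ω' ∂(unif m)) = A := by
    rw [unif, PMF.integral_eq_sum, hA, Finset.sum_div]
    apply Finset.sum_congr rfl
    intro ω _
    simp only [PMF.uniformOfFintype_apply, smul_eq_mul, ENNReal.toReal_inv, ENNReal.toReal_natCast]
    rw [hcardΩ]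
    push_cast
    rw [inv_mul_eq_div]
  rw [hint]
  have hA0 : 0 ≤ A := by
    apply div_nonneg _ (by positivity)
    exact Finset.sum_nonneg fun ω _ => McDAux.pac_nonneg m ⟨1, one_ne_zero⟩ ω
  have hAm : A ≤ m := by
    rw [hA, div_le_iff₀ (by positivity)]
    calc ∑ ω : ZMod m → Bool, pac m ω ≤ ∑ _ω : ZMod m → Bool, (m : ℝ) :=
          Finset.sum_le_sum fun ω _ => McDAux.pac_le m ω
      _ = (m : ℝ) * 2 ^ m := by
          rw [Finset.sum_const, nsmul_eq_mul, Finset.card_univ, hcardΩ]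
          push_cast
          ring
  by_cases hcase : θ' ≤ (m : ℝ)
  · -- main case
    have hmeas : (unif m {ω | |A - pac m ω| ≥ θ'}).toReal =
        ((Finset.univ.filter (fun ω : ZMod m → Bool => θ' ≤ |A - pac m ω|)).card : ℝ) / 2 ^ m := by
      rw [unif, PMF.toMeasure_apply_fintype]
      simp only [Set.indicator_apply, Set.mem_setOf_eq, PMF.uniformOfFintype_apply, ge_iff_le]
      rw [← Finset.sum_filter, Finset.sum_const, nsmul_eq_mul]
      rw [ENNReal.toReal_mul, ENNReal.toReal_inv, ENNReal.toReal_natCast, ENNReal.toReal_natCast, hcardΩ]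
      push_cast
      ring
    set zE : ZMod m ≃ Fin m := Fintype.equivFinOfCardEq (ZMod.card m) with hzE
    set F : (Fin m → Bool) → ℝ := fun σ => pac m (σ ∘ zE) with hF
    set eq1 : (ZMod m → Bool) ≃ (Fin m → Bool) :=
      { toFun := fun ω => ω ∘ zE.symm
        invFun := fun σ => σ ∘ zE
        left_inv := fun ω => by funext i; simp
        right_inv := fun σ => by funext i; simp } with heq1
    have hFE : ∀ ω : ZMod m → Bool, F (eq1 ω) = pac m ω := by
      intro ω
      show pac m ((ω ∘ zE.symm) ∘ zE) = pac m ω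
      congr 1
      funext i
      simp
    have hsumF : ∑ σ, F σ = ∑ ω, pac m ω := by
      rw [← Equiv.sum_comp eq1 F]
      exact Finset.sum_congr rfl fun ω _ => hFE ω
    have hFbd : ∀ (σ : Fin m → Bool) (j : Fin m) (b : Bool),
        |F σ - F (Function.update σ j b)| ≤ 4 := by
      intro σ j b
      have hupd : (Function.update σ j b) ∘ zE = Function.update (σ ∘ zE) (zE.symm j) b :=
        Function.update_comp_equiv σ zE j b
      show |pac m (σ ∘ zE) - pac m ((Function.update σ j b) ∘ zE)| ≤ 4
      rw [hupd]
      exact McDAux.pac_diff m (σ ∘ zE) (zE.symm j) b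
    have hcards : (Finset.univ.filter (fun ω : ZMod m → Bool => θ' ≤ |A - pac m ω|)).card
        = (Finset.univ.filter (fun σ : Fin m → Bool => θ' ≤ |A - F σ|)).card := by
      apply Finset.card_bij (fun ω _ => eq1 ω)
      · intro ω hω
        rw [Finset.mem_filter] at hω ⊢
        exact ⟨Finset.mem_univ _, by rw [hFE]; exact hω.2⟩
      · intro a _ b _ h
        exact eq1.injective h
      · intro σ hσ
        rw [Finset.mem_filter] at hσ
        refine ⟨eq1.symm σ, ?_, eq1.apply_symm_apply σ⟩
        rw [Finset.mem_filter]
        refine ⟨Finset.mem_univ _, ?_⟩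
        rw [← hFE (eq1.symm σ), eq1.apply_symm_apply]
        exact hσ.2
    have hApac : A = (∑ σ, F σ) / 2 ^ m := by rw [hA, hsumF]
    have htail := McDAux.tail_two m hmpos F hFbd θ' (by linarith)
    rw [← hApac] at htail
    rw [hmeas, hcards]
    have hstep : ((Finset.univ.filter (fun σ : Fin m → Bool => θ' ≤ |A - F σ|)).card : ℝ) / 2 ^ m
        ≤ 2 * Real.exp (-θ' ^ 2 / (8 * m)) := by
      rw [div_le_iff₀ (by positivity)]
      calc ((Finset.univ.filter (fun σ : Fin m → Bool => θ' ≤ |A - F σ|)).card : ℝ)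
          ≤ 2 ^ m * (2 * Real.exp (-θ' ^ 2 / (8 * m))) := htail
        _ = 2 * Real.exp (-θ' ^ 2 / (8 * m)) * 2 ^ m := by ring
    refine le_trans hstep ?_
    have h2 : (0 : ℝ) ≤ 2 := by norm_num
    apply mul_le_mul_of_nonneg_left _ h2
    apply Real.exp_le_exp.2
    rw [neg_div, neg_div, neg_le_neg_iff]
    rw [div_le_div_iff₀ (by linarith : (0 : ℝ) < 8 * ((m : ℝ) - 1)) (by positivity : (0 : ℝ) < 8 * (m : ℝ))]
    nlinarith [mul_nonneg (sub_nonneg.2 hcase) (by linarith : (0 : ℝ) ≤ θ'),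
      mul_nonneg (by linarith : (0 : ℝ) ≤ (m : ℝ)) (by linarith : (0 : ℝ) ≤ 7 * θ' - 16)]
  · -- event is empty
    push_neg at hcase
    have hE : {ω : ZMod m → Bool | |A - pac m ω| ≥ θ'} = ∅ := by
      ext ω
      simp only [Set.mem_setOf_eq, Set.mem_empty_iff_false, iff_false, not_le, ge_iff_le]
      have h1 : 0 ≤ pac m ω := McDAux.pac_nonneg m ⟨1, one_ne_zero⟩ ω
      have h2 : pac m ω ≤ m := McDAux.pac_le m ω
      have h3 : |A - pac m ω| ≤ m := abs_le.2 ⟨by linarith, by linarith⟩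
      linarith
    rw [hE]
    simp only [measure_empty, ENNReal.toReal_zero]
    positivity
end

section
/- Let m be a prime, S_m a uniformly random sequence in {−1,1}^m, p a positive integer, and a, b nonzero elements of F_m. Let ξ = (a_1, …, a_{4p}) be the sequence with a_1 = … = a_{2p} = a and a_{2p+1} = … = a_{4p} = b. Then the mixed moment E[ ( Σ_{i ∈ F_m} s_i s_{i+a} )^{2p} · ( Σ_{j ∈ F_m} s_j s_{j+b} )^{2p} ] equals E(ξ), the number of ξ-even sequences in F_m^{4p}. -/
open MeasureTheory ProbabilityTheory Real Finset

/-- A sequence `x` is `ξ`-even (for `ξ = a`) if in the combined family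
`(x_1, x_1+a_1, …, x_n, x_n+a_n)` every element of `F_m` occurs an even number of times. -/
def XiEven {m n : ℕ} (a x : Fin n → ZMod m) : Prop :=
  ∀ lam : ZMod m,
    Even ((Finset.univ.filter fun i => x i = lam).card +
      (Finset.univ.filter fun i => x i + a i = lam).card)

/-- `E(ξ)`: the number of `ξ`-even sequences in `F_m^n`. -/
noncomputable def Ecount {m n : ℕ} (a : Fin n → ZMod m) : ℕ :=
  Nat.card {x : Fin n → ZMod m // XiEven a x}

section Aux

open Classical in
/-- Product over fibers: `∏ i, g (y i) = ∏ lam, g lam ^ #(fiber)`. -/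
lemma prod_comp_eq_prod_pow {m n : ℕ} [NeZero m] (y : Fin n → ZMod m) (g : ZMod m → ℝ) :
    ∏ i, g (y i) = ∏ lam : ZMod m, g lam ^ (Finset.univ.filter fun i => y i = lam).card := by
  rw [← Finset.prod_fiberwise_of_maps_to (g := y) (t := Finset.univ)
    (fun i _ => Finset.mem_univ (y i)) (fun i => g (y i))]
  refine Finset.prod_congr rfl fun lam _ => ?_
  rw [← Finset.prod_const]
  exact Finset.prod_congr rfl fun i hi => by
    rw [(Finset.mem_filter.1 hi).2]

open Classical in
lemma sum_prod_sgn_pow {m : ℕ} [NeZero m] (c : ZMod m → ℕ) :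
    ∑ ω : ZMod m → Bool, ∏ lam : ZMod m, (sgn ω lam) ^ (c lam) =
      if ∀ lam, Even (c lam) then (2:ℝ) ^ (Fintype.card (ZMod m)) else 0 := by
  have h1 : ∑ ω : ZMod m → Bool, ∏ lam : ZMod m, (sgn ω lam) ^ (c lam) =
      ∏ lam : ZMod m, ∑ b : Bool, (if b then (1:ℝ) else -1) ^ (c lam) := by
    simp only [sgn]
    exact (Fintype.prod_sum fun (lam : ZMod m) (b : Bool) => (if b then (1:ℝ) else -1) ^ (c lam)).symm
  rw [h1]
  have h2 : ∀ lam : ZMod m, (∑ b : Bool, (if b then (1:ℝ) else -1) ^ (c lam)) =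
      if Even (c lam) then 2 else 0 := by
    intro lam
    rcases Nat.even_or_odd (c lam) with h | h
    · simp [Fintype.sum_bool, h, Even.neg_one_pow h]
    · simp [Fintype.sum_bool, Nat.not_even_iff_odd.2 h, Odd.neg_one_pow h]
  simp only [h2]
  by_cases hall : ∀ lam : ZMod m, Even (c lam)
  · rw [if_pos hall, Finset.prod_congr rfl fun lam _ => if_pos (hall lam), Finset.prod_const,
      Finset.card_univ]
  · rw [if_neg hall]
    push_neg at hall
    obtain ⟨lam, hlam⟩ := hall
    exact Finset.prod_eq_zero (Finset.mem_univ lam) (by simp [hlam])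

end Aux

/-- The mixed moment `E[(∑ s_i s_{i+a})^{2p} (∑ s_j s_{j+b})^{2p}]` equals `E(ξ)`,
the number of `ξ`-even sequences, where `ξ` consists of `2p` copies of `a`
followed by `2p` copies of `b`. -/
theorem stmt_9 (m : ℕ) [Fact (Nat.Prime m)] (p : ℕ) (hp : 0 < p)
    (a b : ZMod m) (ha : a ≠ 0) (hb : b ≠ 0) :
    ∫ ω, (corr m a ω) ^ (2 * p) * (corr m b ω) ^ (2 * p) ∂(unif m) =
      (Ecount (fun i : Fin (4 * p) => if (i : ℕ) < 2 * p then a else b) : ℝ) := by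
  classical
  haveI : NeZero m := ⟨(Fact.out (p := Nat.Prime m)).ne_zero⟩
  set ξ : Fin (4 * p) → ZMod m := fun i => if (i : ℕ) < 2 * p then a else b with hξ
  -- Step 1: the integrand as a big sum
  have hcard : (Finset.univ.filter fun i : Fin (4*p) => (i:ℕ) < 2*p).card = 2*p := by
    have h : 2*p < 4*p := by omega
    have : (Finset.univ.filter fun i : Fin (4*p) => (i:ℕ) < 2*p) = Finset.Iio ⟨2*p, h⟩ := by
      ext i; simp [Fin.lt_def]
    rw [this]; simp
  have hcard' : (Finset.univ.filter fun i : Fin (4*p) => ¬ (i:ℕ) < 2*p).card = 2*p := by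
    have := Finset.card_filter_add_card_filter_not
      (s := (Finset.univ : Finset (Fin (4*p)))) (p := fun i => (i:ℕ) < 2*p)
    simp only [Finset.card_univ, Fintype.card_fin] at this
    omega
  have key : ∀ ω : ZMod m → Bool,
      (corr m a ω) ^ (2 * p) * (corr m b ω) ^ (2 * p) =
      ∑ x : Fin (4*p) → ZMod m, ∏ i, (sgn ω (x i) * sgn ω (x i + ξ i)) := by
    intro ω
    have h1 : (∏ i : Fin (4*p), corr m (ξ i) ω)
        = (corr m a ω) ^ (2 * p) * (corr m b ω) ^ (2 * p) := by
      simp only [hξ]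
      calc ∏ i : Fin (4*p), corr m (if (i:ℕ) < 2*p then a else b) ω
          = ∏ i : Fin (4*p), (if (i:ℕ) < 2*p then corr m a ω else corr m b ω) :=
            Finset.prod_congr rfl fun i _ => apply_ite (fun u => corr m u ω) _ _ _
        _ = _ := by
            rw [Finset.prod_ite (f := fun _ => corr m a ω) (g := fun _ => corr m b ω),
              Finset.prod_const, Finset.prod_const, hcard, hcard']
    rw [← h1]
    simp only [corr]
    rw [Fintype.prod_sum (fun i y => sgn ω y * sgn ω (y + ξ i))]
  -- Step 2: compute the integral as an average
  have hint : ∫ ω, (corr m a ω) ^ (2 * p) * (corr m b ω) ^ (2 * p) ∂(unif m) =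
      ∑ ω : ZMod m → Bool, ((Fintype.card (ZMod m → Bool) : ℝ))⁻¹ •
        ((corr m a ω) ^ (2 * p) * (corr m b ω) ^ (2 * p)) := by
    haveI : IsProbabilityMeasure (unif m) := PMF.toMeasure.isProbabilityMeasure _
    rw [integral_fintype (.of_finite)]
    refine Finset.sum_congr rfl fun ω _ => ?_
    congr 1
    rw [measureReal_def, unif, PMF.toMeasure_apply_singleton _ _ (MeasurableSet.singleton ω),
      PMF.uniformOfFintype_apply]
    simp
  rw [hint]
  simp only [key, smul_eq_mul, ← Finset.mul_sum]
  rw [Finset.sum_comm]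
  -- Step 3: for each x, evaluate the sum over ω
  have step3 : ∀ x : Fin (4*p) → ZMod m,
      ∑ ω : ZMod m → Bool, ∏ i, (sgn ω (x i) * sgn ω (x i + ξ i)) =
      if XiEven ξ x then (2:ℝ) ^ (Fintype.card (ZMod m)) else 0 := by
    intro x
    have hprod : ∀ ω : ZMod m → Bool,
        ∏ i, (sgn ω (x i) * sgn ω (x i + ξ i)) =
        ∏ lam : ZMod m, (sgn ω lam) ^
          ((Finset.univ.filter fun i => x i = lam).card +
           (Finset.univ.filter fun i => x i + ξ i = lam).card) := by
      intro ω
      rw [Finset.prod_mul_distrib, prod_comp_eq_prod_pow x (sgn ω),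
        prod_comp_eq_prod_pow (fun i => x i + ξ i) (sgn ω), ← Finset.prod_mul_distrib]
      exact Finset.prod_congr rfl fun lam _ => (pow_add _ _ _).symm
    simp only [hprod]
    rw [sum_prod_sgn_pow]
    exact if_congr Iff.rfl rfl rfl
  simp only [step3]
  rw [Finset.sum_ite, Finset.sum_const, Finset.sum_const, smul_zero, add_zero]
  have hN : ((Fintype.card (ZMod m → Bool) : ℝ)) = 2 ^ Fintype.card (ZMod m) := by
    rw [Fintype.card_fun]
    push_cast [Fintype.card_bool]
    ring
  have hE : (Ecount ξ : ℝ) =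
      ((Finset.univ.filter fun x : Fin (4*p) → ZMod m => XiEven ξ x).card : ℝ) := by
    rw [Ecount, Nat.card_eq_fintype_card, Fintype.card_subtype]
  rw [hE, hN, nsmul_eq_mul]
  have h2 : ((2:ℝ) ^ Fintype.card (ZMod m)) ≠ 0 := by positivity
  field_simp
end

section
/- Let m be a prime, S_m a uniformly random sequence in {−1,1}^m, p a positive integer, a, b nonzero elements of F_m, and θ_1, θ_2 > 0. Let ξ be the sequence of length 4p consisting of 2p copies of a followed by 2p copies of b. Then P( |C_a(S_m)| ≥ θ_1 and |C_b(S_m)| ≥ θ_2 ) ≤ E(ξ)/(θ_1·θ_2)^{2p}, where E(ξ) is the number of ξ-even sequences in F_m^{4p}. -/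
open MeasureTheory ProbabilityTheory Real Finset

section aux
variable {m : ℕ} [NeZero m]

lemma fiber_pow {n : ℕ} (ω : ZMod m → Bool) (f : Fin n → ZMod m) :
    ∏ j, sgn ω (f j) = ∏ i : ZMod m, sgn ω i ^ (Finset.univ.filter fun j => f j = i).card := by
  classical
  rw [← Finset.prod_fiberwise Finset.univ (fun j => f j) (fun j => sgn ω (f j))]
  refine Finset.prod_congr rfl fun i _ => ?_
  rw [Finset.prod_congr rfl (fun j hj => ?_), Finset.prod_const]
  have : f j = i := by simpa using hj
  rw [this]

open scoped Classical in
lemma sum_omega_prod {n : ℕ} (ξ x : Fin n → ZMod m) :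
    ∑ ω : ZMod m → Bool, ∏ j, sgn ω (x j) * sgn ω (x j + ξ j)
      = if XiEven ξ x then (2:ℝ)^m else 0 := by
  classical
  set c : ZMod m → ℕ := fun i =>
    (Finset.univ.filter fun j => x j = i).card +
      (Finset.univ.filter fun j => x j + ξ j = i).card with hc
  have key : ∀ ω : ZMod m → Bool,
      ∏ j, sgn ω (x j) * sgn ω (x j + ξ j) = ∏ i : ZMod m, sgn ω i ^ c i := by
    intro ω
    rw [Finset.prod_mul_distrib, fiber_pow ω (fun j => x j), fiber_pow ω (fun j => x j + ξ j),
      ← Finset.prod_mul_distrib]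
    exact Finset.prod_congr rfl fun i _ => (pow_add _ _ _).symm
  have hfact : ∑ ω : ZMod m → Bool, ∏ i : ZMod m, sgn ω i ^ c i
      = ∏ i : ZMod m, ∑ t : Bool, (if t then (1:ℝ) else -1) ^ c i := by
    rw [Finset.prod_univ_sum (fun _ => (Finset.univ : Finset Bool))
      (fun i t => (if t then (1:ℝ) else -1) ^ c i), Fintype.piFinset_univ]
    rfl
  rw [Finset.sum_congr rfl fun ω _ => key ω, hfact]
  have hin : ∀ i : ZMod m, (∑ t : Bool, (if t then (1:ℝ) else -1) ^ c i)
      = if Even (c i) then 2 else 0 := by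
    intro i
    rw [Fintype.sum_bool]
    by_cases h : Even (c i)
    · rw [if_pos h, if_pos rfl, if_neg (by simp), one_pow, h.neg_one_pow]; norm_num
    · rw [if_neg h, if_pos rfl, if_neg (by simp), one_pow,
        (Nat.not_even_iff_odd.mp h).neg_one_pow]; norm_num
  rw [Finset.prod_congr rfl fun i _ => hin i]
  by_cases h : XiEven ξ x
  · rw [if_pos h]
    rw [Finset.prod_congr rfl fun i _ => if_pos (h i), Finset.prod_const, Finset.card_univ,
      ZMod.card]
  · rw [if_neg h]
    have : ∃ i : ZMod m, ¬ Even (c i) := by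
      by_contra hcon
      push_neg at hcon
      exact h fun lam => hcon lam
    obtain ⟨i, hi⟩ := this
    exact Finset.prod_eq_zero (Finset.mem_univ i) (by rw [if_neg hi])

lemma X_eq_sum (p : ℕ) (a b : ZMod m) (ω : ZMod m → Bool) :
    (corr m a ω) ^ (2*p) * (corr m b ω) ^ (2*p)
      = ∑ x : Fin (4*p) → ZMod m,
          ∏ j, sgn ω (x j) * sgn ω (x j + (if (j : ℕ) < 2*p then a else b)) := by
  classical
  have h1 : (corr m a ω) ^ (2*p) * (corr m b ω) ^ (2*p)
      = ∏ j : Fin (4*p), corr m (if (j : ℕ) < 2*p then a else b) ω := by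
    have : ∀ j : Fin (4*p), corr m (if (j : ℕ) < 2*p then a else b) ω
        = if (j : ℕ) < 2*p then corr m a ω else corr m b ω := fun j =>
      apply_ite (fun u => corr m u ω) _ _ _
    rw [Finset.prod_congr rfl fun j _ => this j,
      Fin.prod_univ_eq_prod_range (fun i => if i < 2*p then corr m a ω else corr m b ω) (4*p),
      Finset.prod_ite, Finset.prod_const, Finset.prod_const]
    have e1 : (Finset.range (4*p)).filter (fun i => i < 2*p) = Finset.range (2*p) := by
      ext i; simp; omega
    have e2 : ((Finset.range (4*p)).filter (fun i => ¬ i < 2*p)).card = 2*p := by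
      have := Finset.card_filter_add_card_filter_not
        (s := Finset.range (4*p)) (p := fun i => i < 2*p)
      rw [e1] at this
      simp only [Finset.card_range] at this ⊢
      omega
    rw [e1, e2, Finset.card_range]
  rw [h1]
  unfold corr
  rw [Finset.prod_univ_sum (fun _ => (Finset.univ : Finset (ZMod m)))
    (fun (j : Fin (4*p)) (i : ZMod m) =>
      sgn ω i * sgn ω (i + (if (j : ℕ) < 2*p then a else b))), Fintype.piFinset_univ]

lemma sum_X (p : ℕ) (a b : ZMod m) :
    ∑ ω : ZMod m → Bool, (corr m a ω) ^ (2*p) * (corr m b ω) ^ (2*p)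
      = 2 ^ m * (Ecount (fun i : Fin (4*p) => if (i : ℕ) < 2*p then a else b) : ℝ) := by
  classical
  set ξ : Fin (4*p) → ZMod m := fun i => if (i : ℕ) < 2*p then a else b with hξ
  rw [Finset.sum_congr rfl fun ω _ => X_eq_sum p a b ω, Finset.sum_comm,
    Finset.sum_congr rfl fun x _ => sum_omega_prod ξ x]
  rw [Finset.sum_ite, Finset.sum_const, Finset.sum_const, smul_zero, add_zero, nsmul_eq_mul,
    mul_comm]
  congr 1
  rw [Ecount, Nat.card_eq_fintype_card, Fintype.card_subtype]

lemma unif_toReal (A : Set (ZMod m → Bool)) :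
    (unif m A).toReal = ∑ ω : ZMod m → Bool, A.indicator (fun _ => ((2:ℝ)^m)⁻¹) ω := by
  classical
  rw [unif, PMF.toMeasure_apply_fintype,
    ENNReal.toReal_sum (fun ω _ => ?_)]
  · refine Finset.sum_congr rfl fun ω _ => ?_
    by_cases h : ω ∈ A
    · rw [Set.indicator_of_mem h, Set.indicator_of_mem h, PMF.uniformOfFintype_apply,
        ENNReal.toReal_inv, ENNReal.toReal_natCast]
      norm_num [Fintype.card_fun, ZMod.card]
    · simp [h]
  · by_cases h : ω ∈ A
    · rw [Set.indicator_of_mem h]; exact PMF.apply_ne_top _ _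
    · simp [h]

end aux

/-- `P(|C_a(S_m)| ≥ θ₁ and |C_b(S_m)| ≥ θ₂) ≤ E(ξ)/(θ₁θ₂)^{2p}`, where `ξ` consists of
`2p` copies of `a` followed by `2p` copies of `b`. -/
theorem stmt_10 (m : ℕ) [Fact (Nat.Prime m)] (p : ℕ) (hp : 0 < p)
    (a b : ZMod m) (ha : a ≠ 0) (hb : b ≠ 0) (θ₁ θ₂ : ℝ) (hθ₁ : 0 < θ₁) (hθ₂ : 0 < θ₂) :
    (unif m {ω | |corr m a ω| ≥ θ₁ ∧ |corr m b ω| ≥ θ₂}).toReal ≤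
      (Ecount (fun i : Fin (4 * p) => if (i : ℕ) < 2 * p then a else b) : ℝ) /
        (θ₁ * θ₂) ^ (2 * p) := by
  classical
  haveI : NeZero m := ⟨(Fact.out : m.Prime).ne_zero⟩
  set ξ : Fin (4*p) → ZMod m := fun i => if (i : ℕ) < 2*p then a else b with hξ
  set A : Set (ZMod m → Bool) := {ω | |corr m a ω| ≥ θ₁ ∧ |corr m b ω| ≥ θ₂} with hA
  have hpow : (0:ℝ) < (θ₁*θ₂)^(2*p) := pow_pos (mul_pos hθ₁ hθ₂) _
  rw [le_div_iff₀ hpow]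
  have hX : ∀ ω : ZMod m → Bool, (corr m a ω)^(2*p) * (corr m b ω)^(2*p)
      = |corr m a ω|^(2*p) * |corr m b ω|^(2*p) := by
    intro ω
    rw [← abs_pow, ← abs_pow, abs_of_nonneg (Even.pow_nonneg (even_two_mul p) _),
      abs_of_nonneg (Even.pow_nonneg (even_two_mul p) _)]
  have hXnn : ∀ ω : ZMod m → Bool, 0 ≤ (corr m a ω)^(2*p) * (corr m b ω)^(2*p) := fun ω => by
    rw [hX]; positivity
  calc (unif m A).toReal * (θ₁*θ₂)^(2*p)
      = ∑ ω : ZMod m → Bool, A.indicator (fun _ => ((2:ℝ)^m)⁻¹) ω * (θ₁*θ₂)^(2*p) := by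
        rw [unif_toReal, Finset.sum_mul]
    _ ≤ ∑ ω : ZMod m → Bool, ((2:ℝ)^m)⁻¹ * ((corr m a ω)^(2*p) * (corr m b ω)^(2*p)) := by
        refine Finset.sum_le_sum fun ω _ => ?_
        by_cases h : ω ∈ A
        · rw [Set.indicator_of_mem h]
          refine mul_le_mul_of_nonneg_left ?_ (by positivity)
          rw [hX, mul_pow]
          exact mul_le_mul (pow_le_pow_left₀ hθ₁.le h.1 _) (pow_le_pow_left₀ hθ₂.le h.2 _)
            (by positivity) (by positivity)
        · rw [Set.indicator_of_notMem h, zero_mul]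
          exact mul_nonneg (by positivity) (hXnn ω)
    _ = (Ecount ξ : ℝ) := by
        rw [← Finset.mul_sum, sum_X p a b, inv_mul_cancel_left₀ (by positivity)]
end

section
/- Let m be a prime and ξ = (a_1, …, a_n) a sequence of elements of F_m. If there exists a ξ-even sequence in F_m^n, then the full index set {1, …, n} is a ξ-subset, i.e., there is a choice of signs ε_i ∈ {−1, 1} such that Σ_{i=1}^{n} ε_i a_i = 0 in F_m. -/
open List

private def fl {m : ℕ} (l : List (ZMod m × ZMod m)) : List (ZMod m) :=
  l.flatMap fun p => [p.1, p.2]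

private lemma fl_cons {m : ℕ} (p) (t : List (ZMod m × ZMod m)) :
    fl (p :: t) = p.1 :: p.2 :: fl t := rfl

private lemma fl_append {m : ℕ} (s t : List (ZMod m × ZMod m)) :
    fl (s ++ t) = fl s ++ fl t := by simp [fl]

private lemma forall2_split {α β : Type*} {R : α → β → Prop} :
    ∀ {t₁ : List α} {q : α} {t₂ : List α} {s : List β},
      List.Forall₂ R (t₁ ++ q :: t₂) s →
      ∃ s₁ v s₂, s = s₁ ++ v :: s₂ ∧ List.Forall₂ R t₁ s₁ ∧ R q v ∧ List.Forall₂ R t₂ s₂ := by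
  intro t₁
  induction t₁ with
  | nil => intro q t₂ s h; rcases h with _ | ⟨hv, hs⟩; exact ⟨[], _, _, rfl, .nil, hv, hs⟩
  | cons a t ih =>
    intro q t₂ s h
    rcases h with _ | ⟨hv, hs⟩
    obtain ⟨s₁, v, s₂, rfl, h1, h2, h3⟩ := ih hs
    exact ⟨_ :: s₁, v, s₂, rfl, .cons hv h1, h2, h3⟩

private lemma key {m : ℕ} : ∀ (n : ℕ) (l : List (ZMod m × ZMod m)), l.length = n →
    (∀ lam, Even ((fl l).count lam)) →
    ∃ s : List (ZMod m),
      List.Forall₂ (fun p v => v = p.2 - p.1 ∨ v = p.1 - p.2) l s ∧ s.sum = 0 := by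
  intro n
  induction n with
  | zero =>
    intro l hl _
    rw [List.length_eq_zero_iff] at hl
    subst hl
    exact ⟨[], .nil, rfl⟩
  | succ n ih =>
    intro l hl hev
    match l with
    | p :: t =>
    by_cases hpp : p.2 = p.1
    · have hev' : ∀ lam, Even ((fl t).count lam) := by
        intro lam
        have h := hev lam
        rw [fl_cons] at h
        simp only [List.count_cons, hpp] at h
        rw [Nat.even_iff] at h ⊢
        split_ifs at h <;> omega
      obtain ⟨s, hs, hsum⟩ := ih t (by simpa using hl) hev'
      exact ⟨(p.2 - p.1) :: s, .cons (Or.inl rfl) hs, by simp [hsum, hpp]⟩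
    · -- find another occurrence of p.1 in fl t
      have h1 := hev p.1
      rw [fl_cons] at h1
      simp only [List.count_cons] at h1
      have hodd : 0 < (fl t).count p.1 := by
        simp only [beq_iff_eq, hpp, if_false, if_true, Nat.even_iff] at h1
        omega
      have hmem : p.1 ∈ fl t := List.count_pos_iff.mp hodd
      simp only [fl, List.mem_flatMap, List.mem_cons, List.not_mem_nil, or_false] at hmem
      obtain ⟨q, hq, hc | hc⟩ := hmem
      all_goals obtain ⟨t₁, t₂, rfl⟩ := List.append_of_mem hq
      · -- p.1 = q.1 : new pair (p.2, q.2)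
        have hev' : ∀ lam, Even ((fl (t₁ ++ (p.2, q.2) :: t₂)).count lam) := by
          intro lam
          have h := hev lam
          simp only [fl_cons, fl_append, List.count_append, List.count_cons] at h ⊢
          rw [hc] at h
          rw [Nat.even_iff] at h ⊢
          split_ifs at h ⊢ <;> omega
        obtain ⟨s, hs, hsum⟩ := ih (t₁ ++ (p.2, q.2) :: t₂)
          (by simp at hl ⊢; omega) hev'
        obtain ⟨s₁, v, s₂, rfl, hs1, hv, hs2⟩ := forall2_split hs
        simp only at hv
        simp only [List.sum_cons, List.sum_append, List.sum_cons] at hsum ⊢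
        rcases hv with hv | hv
        · refine ⟨(p.1 - p.2) :: s₁ ++ (q.2 - q.1) :: s₂,
            .cons (Or.inr rfl) (List.rel_append hs1 (.cons (Or.inl rfl) hs2)), ?_⟩
          simp only [List.sum_cons, List.sum_append]
          rw [hc]
          linear_combination hsum - hv
        · refine ⟨(p.2 - p.1) :: s₁ ++ (q.1 - q.2) :: s₂,
            .cons (Or.inl rfl) (List.rel_append hs1 (.cons (Or.inr rfl) hs2)), ?_⟩
          simp only [List.sum_cons, List.sum_append]
          rw [hc]
          linear_combination hsum - hv
      · -- p.1 = q.2 : new pair (q.1, p.2)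
        have hev' : ∀ lam, Even ((fl (t₁ ++ (q.1, p.2) :: t₂)).count lam) := by
          intro lam
          have h := hev lam
          simp only [fl_cons, fl_append, List.count_append, List.count_cons] at h ⊢
          rw [hc] at h
          rw [Nat.even_iff] at h ⊢
          split_ifs at h ⊢ <;> omega
        obtain ⟨s, hs, hsum⟩ := ih (t₁ ++ (q.1, p.2) :: t₂)
          (by simp at hl ⊢; omega) hev'
        obtain ⟨s₁, v, s₂, rfl, hs1, hv, hs2⟩ := forall2_split hs
        simp only at hv
        simp only [List.sum_cons, List.sum_append, List.sum_cons] at hsum ⊢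
        rcases hv with hv | hv
        · refine ⟨(p.2 - p.1) :: s₁ ++ (q.2 - q.1) :: s₂,
            .cons (Or.inl rfl) (List.rel_append hs1 (.cons (Or.inl rfl) hs2)), ?_⟩
          simp only [List.sum_cons, List.sum_append]
          rw [hc]
          linear_combination hsum - hv
        · refine ⟨(p.1 - p.2) :: s₁ ++ (q.1 - q.2) :: s₂,
            .cons (Or.inr rfl) (List.rel_append hs1 (.cons (Or.inr rfl) hs2)), ?_⟩
          simp only [List.sum_cons, List.sum_append]
          rw [hc]
          linear_combination hsum - hv

private lemma countP_eq_sum {α : Type*} (pr : α → Bool) (l : List α) :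
    l.countP pr = (l.map fun x => if pr x then 1 else 0).sum := by
  induction l with
  | nil => rfl
  | cons a t ih => simp [List.countP_cons, ih]; split_ifs <;> omega

private lemma countP_ofFn {α : Type*} {n : ℕ} (g : Fin n → α) (pr : α → Prop)
    [DecidablePred pr] :
    ((List.ofFn g).countP fun x => decide (pr x)) = (Finset.univ.filter fun i => pr (g i)).card := by
  rw [countP_eq_sum, List.map_ofFn, List.sum_ofFn, Finset.card_filter]
  simp [Function.comp]

private lemma count_fl' {m : ℕ} (l : List (ZMod m × ZMod m)) (lam : ZMod m) :
    (fl l).count lam = (l.countP fun p => decide (p.1 = lam)) +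
      (l.countP fun p => decide (p.2 = lam)) := by
  induction l with
  | nil => rfl
  | cons p t ih =>
    simp only [fl_cons, List.count_cons, List.countP_cons, ih, decide_eq_true_eq, beq_iff_eq,
      @eq_comm _ lam]
    split_ifs <;> omega

/-- If there exists a `ξ`-even sequence, then the full index set is a `ξ`-subset:
there are signs `ε_i ∈ {−1,1}` with `∑ ε_i a_i = 0` in `F_m`. -/
theorem stmt_12 (m : ℕ) (hm : Nat.Prime m) (n : ℕ) (a : Fin n → ZMod m)
    (h : ∃ x : Fin n → ZMod m, XiEven a x) :
    ∃ ε : Fin n → ℤ, (∀ i, ε i = 1 ∨ ε i = -1) ∧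
      ∑ i, (ε i : ZMod m) * a i = 0 := by
  obtain ⟨x, hx⟩ := h
  set l : List (ZMod m × ZMod m) := List.ofFn (fun i => (x i, x i + a i)) with hldef
  have hev : ∀ lam, Even ((fl l).count lam) := by
    intro lam
    rw [count_fl', hldef, countP_ofFn (fun i => (x i, x i + a i)) (fun p => p.1 = lam),
      countP_ofFn (fun i => (x i, x i + a i)) (fun p => p.2 = lam)]
    exact hx lam
  obtain ⟨s, hs, hsum⟩ := key l.length l rfl hev
  have hsl : s.length = n := by
    rw [← hs.length_eq, hldef, List.length_ofFn]
  subst hsl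
  set σ : Fin s.length → ZMod m := fun i => s.get i with hσ
  have hR : ∀ i, σ i = a i ∨ σ i = -(a i) := by
    intro i
    obtain ⟨hl2, hget⟩ := List.forall₂_iff_get.mp hs
    have := hget i (by rw [hl2]; exact i.2) i.2
    rcases this with h' | h' <;> [left; right] <;>
      · rw [hσ]
        simp only [hldef, List.get_eq_getElem, List.getElem_ofFn, Fin.eta] at h'
        simp only [List.get_eq_getElem]
        rw [h']
        ring
  have hsum2 : ∑ i, σ i = 0 := by
    rw [← hsum]
    conv_rhs => rw [← List.ofFn_get s]
    rw [List.sum_ofFn]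
  refine ⟨fun i => if σ i = a i then 1 else -1, fun i => ?_, ?_⟩
  · by_cases hc : σ i = a i <;> simp [hc]
  · rw [← hsum2]
    refine Finset.sum_congr rfl fun i _ => ?_
    by_cases hcase : σ i = a i
    · simp [hcase]
    · rcases hR i with h' | h'
      · exact absurd h' hcase
      · simp only
        rw [if_neg hcase, h']
        push_cast
        ring
end

section
/- Let m be a prime and ξ = (a_1, …, a_n) a sequence of elements of F_m. Then E(ξ) ≤ Σ_P E(P), where the sum is over all ξ-partitions P of {1, …, n}; here E(ξ) is the number of ξ-even sequences in F_m^n and, for a ξ-partition P = (J_α), E(P) is the number of sequences x = (x_1, …, x_n) in F_m^n such that for every block J_α the sequence (x_j)_{j ∈ J_α} is (a_j)_{j ∈ J_α}-even. -/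
/-- A subset `J` of the index set is a `ξ`-subset if `∑_{j ∈ J} ± a_j = 0` in `F_m`
for some choice of signs. -/
def XiSubset {m n : ℕ} (a : Fin n → ZMod m) (J : Finset (Fin n)) : Prop :=
  ∃ ε : Fin n → ℤ, (∀ i, ε i = 1 ∨ ε i = -1) ∧ ∑ j ∈ J, (ε j : ZMod m) * a j = 0

/-- The family `(x_j, x_j + a_j)_{j ∈ J}` is even. -/
def BlockEven {m n : ℕ} (a : Fin n → ZMod m) (J : Finset (Fin n))
    (x : Fin n → ZMod m) : Prop :=
  ∀ lam : ZMod m,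
    Even ((J.filter fun i => x i = lam).card + (J.filter fun i => x i + a i = lam).card)

/-- A `ξ`-partition: a partition of the index set all of whose blocks are `ξ`-subsets. -/
def XiPartition {m n : ℕ} (a : Fin n → ZMod m)
    (P : Finpartition (Finset.univ : Finset (Fin n))) : Prop :=
  ∀ J ∈ P.parts, XiSubset a J

/-- `E(P)`: the number of sequences `x` such that `(x_j, x_j + a_j)_{j ∈ J}` is even
for every block `J` of the partition `P`. -/
noncomputable def EPcount {m n : ℕ} (a : Fin n → ZMod m)
    (P : Finpartition (Finset.univ : Finset (Fin n))) : ℕ :=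
  Nat.card {x : Fin n → ZMod m // ∀ J ∈ P.parts, BlockEven a J x}


open Multiset

section Key
variable {G : Type*} [AddCommGroup G] [DecidableEq G]

/-- difference of a pair -/
def MDiff (p : G × G) : G := p.2 - p.1

/-- each value appears evenly often among the firsts and seconds -/
def MEven (M : Multiset (G × G)) : Prop :=
  ∀ lam : G, Even ((M.map Prod.fst).count lam + (M.map Prod.snd).count lam)

/-- the multiset splits into two halves with equal sum of differences -/
def MBal (M : Multiset (G × G)) : Prop :=
  ∃ M₁ M₂, M = M₁ + M₂ ∧ (M₁.map MDiff).sum = (M₂.map MDiff).sum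

lemma meven_of_parity {M N : Multiset (G × G)} (u : G)
    (h : ∀ lam, (M.map Prod.fst).count lam + (M.map Prod.snd).count lam
        = (N.map Prod.fst).count lam + (N.map Prod.snd).count lam
          + 2 * (if lam = u then 1 else 0))
    (hM : MEven M) : MEven N := by
  intro lam
  have h2 := hM lam
  rw [h lam] at h2
  rcases h2 with ⟨k, hk⟩
  exact ⟨k - (if lam = u then 1 else 0), by split_ifs at hk ⊢ <;> omega⟩

lemma meven_mbal : ∀ (k : ℕ) (M : Multiset (G × G)), M.card ≤ k → MEven M → MBal M := by
  intro k
  induction k with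
  | zero =>
    intro M hM _
    refine ⟨0, 0, ?_, rfl⟩
    simpa using card_eq_zero.1 (Nat.le_zero.1 hM)
  | succ k IH =>
    intro M hcard hE
    rcases M.empty_or_exists_mem with rfl | ⟨p, hp⟩
    · exact ⟨0, 0, by simp, rfl⟩
    obtain ⟨u, v⟩ := p
    obtain ⟨M', rfl⟩ := exists_cons_of_mem hp
    by_cases huv : u = v
    · -- loop : remove it
      subst huv
      have hE' : MEven M' := by
        refine meven_of_parity u (fun lam => ?_) hE
        simp only [map_cons, count_cons]
        split_ifs <;> omega
      have hcard' : M'.card ≤ k := by simp only [card_cons] at hcard; omega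
      obtain ⟨M₁, M₂, rfl, hs⟩ := IH M' hcard' hE'
      exact ⟨(u, u) ::ₘ M₁, M₂, by rw [cons_add],
        by simp only [map_cons, sum_cons, MDiff, sub_self, zero_add]; exact hs⟩
    · -- real edge: find another edge at u and contract
      have hodd : ¬ Even ((M'.map Prod.fst).count u + (M'.map Prod.snd).count u) := by
        have h2 := hE u
        simp only [map_cons, count_cons, if_true, eq_self_iff_true, if_neg huv, add_zero] at h2
        rcases h2 with ⟨k, hk⟩
        rintro ⟨j, hj⟩; omega
      have hpos : 0 < (M'.map Prod.fst).count u ∨ 0 < (M'.map Prod.snd).count u := by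
        by_contra hcon
        push_neg at hcon
        exact hodd (by simp [Nat.le_zero.mp hcon.1, Nat.le_zero.mp hcon.2])
      rcases hpos with hposf | hposs
      · -- another edge (u, w) with first coordinate u
        have hu : u ∈ M'.map Prod.fst := count_pos.1 hposf
        obtain ⟨q, hq, hq1⟩ := mem_map.1 hu
        obtain ⟨M'', rfl⟩ := exists_cons_of_mem hq
        obtain ⟨u', w⟩ := q
        have h4 : u = u' := hq1.symm
        subst h4
        have hcard' : ((v, w) ::ₘ M'').card ≤ k := by
          simp only [card_cons] at hcard ⊢; omega
        have hE' : MEven ((v, w) ::ₘ M'') := by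
          refine meven_of_parity u (fun lam => ?_) hE
          simp only [map_cons, count_cons]
          split_ifs <;> omega
        obtain ⟨N₁, N₂, hN, hs⟩ := IH _ hcard' hE'
        have hc : ∀ r, ((v, w) ::ₘ M'').count r = (N₁ + N₂).count r :=
          fun r => by rw [hN]
        rcases mem_add.1 (hN ▸ mem_cons_self (v, w) M'') with hmem | hmem
        · obtain ⟨N₁', rfl⟩ := exists_cons_of_mem hmem
          refine ⟨(u, w) ::ₘ N₁', (u, v) ::ₘ N₂, ?_, ?_⟩
          · ext r
            have h3 := hc r
            simp only [count_cons, count_add] at h3 ⊢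
            split_ifs at h3 ⊢ <;> omega
          · simp only [map_cons, sum_cons, MDiff] at hs ⊢
            rw [← hs]; abel
        · obtain ⟨N₂', rfl⟩ := exists_cons_of_mem hmem
          refine ⟨(u, v) ::ₘ N₁, (u, w) ::ₘ N₂', ?_, ?_⟩
          · ext r
            have h3 := hc r
            simp only [count_cons, count_add] at h3 ⊢
            split_ifs at h3 ⊢ <;> omega
          · simp only [map_cons, sum_cons, MDiff] at hs ⊢
            rw [hs]; abel
      · -- another edge (w, u) with second coordinate u
        have hu : u ∈ M'.map Prod.snd := count_pos.1 hposs
        obtain ⟨q, hq, hq1⟩ := mem_map.1 hu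
        obtain ⟨M'', rfl⟩ := exists_cons_of_mem hq
        obtain ⟨w, u'⟩ := q
        have h4 : u = u' := hq1.symm
        subst h4
        have hcard' : ((w, v) ::ₘ M'').card ≤ k := by
          simp only [card_cons] at hcard ⊢; omega
        have hE' : MEven ((w, v) ::ₘ M'') := by
          refine meven_of_parity u (fun lam => ?_) hE
          simp only [map_cons, count_cons]
          split_ifs <;> omega
        obtain ⟨N₁, N₂, hN, hs⟩ := IH _ hcard' hE'
        have hc : ∀ r, ((w, v) ::ₘ M'').count r = (N₁ + N₂).count r :=
          fun r => by rw [hN]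
        rcases mem_add.1 (hN ▸ mem_cons_self (w, v) M'') with hmem | hmem
        · obtain ⟨N₁', rfl⟩ := exists_cons_of_mem hmem
          refine ⟨(u, v) ::ₘ (w, u) ::ₘ N₁', N₂, ?_, ?_⟩
          · ext r
            have h3 := hc r
            simp only [count_cons, count_add] at h3 ⊢
            split_ifs at h3 ⊢ <;> omega
          · simp only [map_cons, sum_cons, MDiff] at hs ⊢
            rw [← hs]; abel
        · obtain ⟨N₂', rfl⟩ := exists_cons_of_mem hmem
          refine ⟨N₁, (u, v) ::ₘ (w, u) ::ₘ N₂', ?_, ?_⟩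
          · ext r
            have h3 := hc r
            simp only [count_cons, count_add] at h3 ⊢
            split_ifs at h3 ⊢ <;> omega
          · simp only [map_cons, sum_cons, MDiff] at hs ⊢
            rw [hs]; abel

end Key

lemma map_eq_add_split {ι β : Type*} (f : ι → β) :
    ∀ (t₁ : Multiset β) (s : Multiset ι) (t₂ : Multiset β), s.map f = t₁ + t₂ →
      ∃ s₁ s₂, s = s₁ + s₂ ∧ s₁.map f = t₁ ∧ s₂.map f = t₂ := by
  intro t₁
  induction t₁ using Multiset.induction with
  | empty => exact fun s t₂ h => ⟨0, s, by simp, by simp, by simpa using h⟩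
  | cons b t₁ IH =>
    intro s t₂ h
    have hb : b ∈ s.map f := by rw [h]; simp
    obtain ⟨i, hi, rfl⟩ := mem_map.1 hb
    obtain ⟨s', rfl⟩ := exists_cons_of_mem hi
    rw [map_cons, cons_add, cons_inj_right] at h
    obtain ⟨s₁, s₂, rfl, h₁, h₂⟩ := IH s' t₂ h
    exact ⟨i ::ₘ s₁, s₂, by rw [cons_add], by rw [map_cons, h₁], h₂⟩

lemma xiSubset_univ_of_xiEven {m n : ℕ} (a x : Fin n → ZMod m) (hx : XiEven a x) :
    XiSubset a Finset.univ := by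
  classical
  set g : Fin n → ZMod m × ZMod m := fun i => (x i, x i + a i) with hg
  set M : Multiset (ZMod m × ZMod m) := Finset.univ.val.map g with hM
  have hcnt : ∀ (y : Fin n → ZMod m) (lam : ZMod m),
      (Finset.univ.val.map y).count lam
        = (Finset.univ.filter fun i => y i = lam).card := by
    intro y lam
    rw [Multiset.count_map]
    show _ = Multiset.card (Multiset.filter (fun i => y i = lam) Finset.univ.val)
    congr 1
    exact Multiset.filter_congr fun i _ => by rw [eq_comm]
  have hE : MEven M := by
    intro lam
    have h1 : (M.map Prod.fst) = Finset.univ.val.map x := by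
      rw [hM, Multiset.map_map]; rfl
    have h2 : (M.map Prod.snd) = Finset.univ.val.map (fun i => x i + a i) := by
      rw [hM, Multiset.map_map]; rfl
    rw [h1, h2, hcnt, hcnt]
    exact hx lam
  obtain ⟨M₁, M₂, hsplit, hsum⟩ := meven_mbal M.card M le_rfl hE
  obtain ⟨S₁, S₂, hS, h₁, h₂⟩ := map_eq_add_split g M₁ Finset.univ.val M₂ hsplit
  have hdisj : ∀ i ∈ S₂, i ∉ S₁ := by
    intro i hi₂ hi₁
    have h5 : Multiset.count i Finset.univ.val
        = Multiset.count i S₁ + Multiset.count i S₂ := by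
      rw [hS, Multiset.count_add]
    have h6 : Multiset.count i Finset.univ.val ≤ 1 :=
      Multiset.nodup_iff_count_le_one.1 Finset.univ.nodup i
    have h7 : 1 ≤ Multiset.count i S₁ := Multiset.one_le_count_iff_mem.2 hi₁
    have h8 : 1 ≤ Multiset.count i S₂ := Multiset.one_le_count_iff_mem.2 hi₂
    omega
  refine ⟨fun i => if i ∈ S₁ then 1 else -1,
    fun i => by by_cases h : i ∈ S₁ <;> simp [h], ?_⟩
  have hdiff : ∀ i : Fin n, MDiff (g i) = a i := fun i => by
    simp [hg, MDiff]
  have hsum_def : ∑ j ∈ Finset.univ, ((if j ∈ S₁ then (1:ℤ) else -1 : ℤ) : ZMod m) * a j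
      = ((S₁ + S₂).map fun j => ((if j ∈ S₁ then (1:ℤ) else -1 : ℤ) : ZMod m) * a j).sum := by
    rw [← hS]; rfl
  rw [hsum_def, Multiset.map_add, Multiset.sum_add]
  have e₁ : (S₁.map fun j => ((if j ∈ S₁ then (1:ℤ) else -1 : ℤ) : ZMod m) * a j).sum
      = (M₁.map MDiff).sum := by
    rw [← h₁, Multiset.map_map]
    congr 1
    refine Multiset.map_congr rfl fun i hi => ?_
    rw [if_pos hi]
    show ((1:ℤ) : ZMod m) * a i = MDiff (g i)
    rw [hdiff i]; push_cast; ring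
  have e₂ : (S₂.map fun j => ((if j ∈ S₁ then (1:ℤ) else -1 : ℤ) : ZMod m) * a j).sum
      = -(M₂.map MDiff).sum := by
    rw [← h₂, Multiset.map_map, ← Multiset.sum_map_neg]
    congr 1
    refine Multiset.map_congr rfl fun i hi => ?_
    rw [if_neg (hdisj i hi)]
    show ((-1:ℤ) : ZMod m) * a i = -(MDiff (g i))
    rw [hdiff i]; push_cast; ring
  rw [e₁, e₂, hsum, add_neg_cancel]

/-- `E(ξ) ≤ ∑_P E(P)`, the sum being over all `ξ`-partitions `P` of the index set. -/
theorem stmt_14 (m : ℕ) (hm : Nat.Prime m) (n : ℕ) (a : Fin n → ZMod m) :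
    Ecount a ≤ ∑ᶠ P ∈ {P : Finpartition (Finset.univ : Finset (Fin n)) | XiPartition a P},
      EPcount a P := by
  classical
  haveI : NeZero m := ⟨hm.pos.ne'⟩
  by_cases hne : Nonempty {x : Fin n → ZMod m // XiEven a x}
  swap
  · haveI : IsEmpty {x : Fin n → ZMod m // XiEven a x} := not_nonempty_iff.1 hne
    rw [Ecount, Nat.card_of_isEmpty]
    exact Nat.zero_le _
  obtain ⟨x₀, hx₀⟩ := hne
  obtain ⟨P₀, hP₀, hle⟩ : ∃ P₀, XiPartition a P₀ ∧ Ecount a ≤ EPcount a P₀ := by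
    by_cases hn : (Finset.univ : Finset (Fin n)) = ⊥
    · refine ⟨(Finpartition.empty (Finset (Fin n))).copy hn.symm, ?_, ?_⟩
      · intro J hJ
        simp [Finpartition.copy_parts, Finpartition.empty_parts] at hJ
      · refine Nat.card_le_card_of_injective
          (fun p => ⟨p.1, fun J hJ => ?_⟩) fun p q h => by apply Subtype.ext; simpa [Subtype.ext_iff] using h
        simp [Finpartition.copy_parts, Finpartition.empty_parts] at hJ
    · refine ⟨Finpartition.indiscrete hn, ?_, ?_⟩
      · intro J hJ
        rw [Finpartition.indiscrete_parts, Finset.mem_singleton] at hJ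
        subst hJ
        exact xiSubset_univ_of_xiEven a x₀ hx₀
      · refine Nat.card_le_card_of_injective
          (fun p => ⟨p.1, fun J hJ => ?_⟩) fun p q h => by apply Subtype.ext; simpa [Subtype.ext_iff] using h
        rw [Finpartition.indiscrete_parts, Finset.mem_singleton] at hJ
        subst hJ
        exact p.2
  have hfin : ({P : Finpartition (Finset.univ : Finset (Fin n)) | XiPartition a P}).Finite :=
    Set.toFinite _
  rw [finsum_mem_eq_finite_toFinset_sum _ hfin]
  exact hle.trans (Finset.single_le_sum (fun P _ => Nat.zero_le _) (hfin.mem_toFinset.2 hP₀))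
end

section
/- Let m be a prime, p a positive integer, and a, b coprime positive integers with a odd and 2p(a + b) < m. Let ξ = (a_1, …, a_{4p}) be the sequence in F_m with a_1 = … = a_{2p} = a and a_{2p+1} = … = a_{4p} = b, and let J be a ξ-subset of {1, …, 4p} of type (j, k). Then: (a) if j and k are both even, J is a disjoint union of j/2 ξ-subsets of type (2,0) and k/2 ξ-subsets of type (0,2); (b) k is odd if and only if J is a disjoint union of one ξ-subset of type (b, a) together with some ξ-subsets of type (2,0) and of type (0,2). -/
/-- `J ⊆ {1,…,4p}` has type `(j, k)` if it has `j` elements in the first half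
`{1,…,2p}` of the index set and `k` elements in the second half `{2p+1,…,4p}`. -/
def IsType {p : ℕ} (J : Finset (Fin (4 * p))) (j k : ℕ) : Prop :=
  (J.filter fun i : Fin (4 * p) => (i : ℕ) < 2 * p).card = j ∧
    (J.filter fun i : Fin (4 * p) => 2 * p ≤ (i : ℕ)).card = k

instance {p : ℕ} (J : Finset (Fin (4 * p))) (j k : ℕ) : Decidable (IsType J j k) := by
  unfold IsType; infer_instance

lemma pairing {α : Type*} [DecidableEq α] (n : ℕ) :
    ∀ S : Finset α, S.card = 2 * n →
    ∃ 𝒞 : Finset (Finset α),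
      (𝒞 : Set (Finset α)).PairwiseDisjoint id ∧ 𝒞.sup id = S ∧
      (∀ B ∈ 𝒞, B.card = 2) ∧ 𝒞.card = n := by
  induction n with
  | zero =>
    intro S hS
    refine ⟨∅, by simp, ?_, by simp, rfl⟩
    simp [Finset.card_eq_zero.mp (by simpa using hS)]
  | succ n ih =>
    intro S hS
    have h2 : 0 < S.card := by omega
    obtain ⟨x, hx⟩ := Finset.card_pos.mp h2
    have hy0 : 0 < (S.erase x).card := by rw [Finset.card_erase_of_mem hx]; omega
    obtain ⟨y, hy⟩ := Finset.card_pos.mp hy0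
    have hxy : y ≠ x := Finset.ne_of_mem_erase hy
    have hyS : y ∈ S := Finset.mem_of_mem_erase hy
    have hsub : ({x, y} : Finset α) ⊆ S := by
      intro z hz; rcases Finset.mem_insert.mp hz with h | h
      · exact h ▸ hx
      · exact (Finset.mem_singleton.mp h) ▸ hyS
    have hcard2 : ({x, y} : Finset α).card = 2 := by
      rw [Finset.card_insert_of_notMem (by simp [hxy.symm])]; simp
    have hcards : (S \ {x, y}).card = 2 * n := by
      rw [Finset.card_sdiff_of_subset hsub, hcard2]; omega
    obtain ⟨𝒞, hd, hsup, hc2, hcn⟩ := ih (S \ {x, y}) hcards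
    have hblock : ∀ B ∈ 𝒞, B ⊆ S \ {x, y} := fun B hB =>
      (hsup ▸ (Finset.le_sup (f := id) hB) : B ⊆ S \ {x, y})
    have hnotmem : ({x, y} : Finset α) ∉ 𝒞 := by
      intro h
      have := hblock _ h (Finset.mem_insert_self x {y})
      simp at this
    refine ⟨insert {x, y} 𝒞, ?_, ?_, ?_, ?_⟩
    · rw [Finset.coe_insert]
      refine Set.PairwiseDisjoint.insert hd fun C hC _ => ?_
      have hC' := hblock _ hC
      exact Finset.disjoint_left.mpr fun z hz hzC => (Finset.mem_sdiff.mp (hC' hzC)).2 hz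
    · rw [Finset.sup_insert, hsup]
      simpa using Finset.union_sdiff_of_subset hsub
    · intro B hB
      rcases Finset.mem_insert.mp hB with h | h
      · exact h ▸ hcard2
      · exact hc2 B h
    · rw [Finset.card_insert_of_notMem hnotmem, hcn]

lemma card_filter_sup {α : Type*} [DecidableEq α] (𝒞 : Finset (Finset α))
    (hd : (𝒞 : Set (Finset α)).PairwiseDisjoint id) (P : α → Prop) [DecidablePred P] :
    ((𝒞.sup id).filter P).card = ∑ B ∈ 𝒞, (B.filter P).card := by
  rw [Finset.sup_eq_biUnion, Finset.filter_biUnion]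
  refine Finset.card_biUnion fun x hx y hy hxy => ?_
  exact Finset.disjoint_filter_filter (hd (Finset.mem_coe.mpr hx) (Finset.mem_coe.mpr hy) hxy)


lemma filter_lt_card (p : ℕ) :
    (Finset.univ.filter fun i : Fin (4 * p) => (i : ℕ) < 2 * p).card = 2 * p := by
  have : (Finset.univ.filter fun i : Fin (4 * p) => (i : ℕ) < 2 * p) =
      (Finset.range (2 * p)).attachFin (fun m hm => by
        have := Finset.mem_range.mp hm; omega) := by
    ext i
    simp [Finset.mem_attachFin]
  rw [this, Finset.card_attachFin, Finset.card_range]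

lemma key_nt (m : ℕ) (p : ℕ) (a b : ℕ) (ha : 0 < a) (hb : 0 < b)
    (hab : Nat.Coprime a b) (haodd : Odd a) (hsize : 2 * p * (a + b) < m)
    (j k : ℕ) (J : Finset (Fin (4 * p)))
    (hJ : ∃ ε : Fin (4 * p) → ℤ, (∀ i, ε i = 1 ∨ ε i = -1) ∧
      ∑ i ∈ J, (ε i : ZMod m) * (if (i : ℕ) < 2 * p then (a : ZMod m) else (b : ZMod m)) = 0)
    (hj : (J.filter fun i : Fin (4 * p) => (i : ℕ) < 2 * p).card = j)
    (hk : (J.filter fun i : Fin (4 * p) => ¬ (i : ℕ) < 2 * p).card = k)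
    (hkodd : Odd k) :
    b ≤ j ∧ a ≤ k ∧ Even (j - b) ∧ Even (k - a) := by
  obtain ⟨ε, hε, hsum⟩ := hJ
  set F := J.filter fun i : Fin (4 * p) => (i : ℕ) < 2 * p with hF
  set G := J.filter fun i : Fin (4 * p) => ¬ (i : ℕ) < 2 * p with hG
  set S : ℤ := ∑ i ∈ F, ε i with hS
  set T : ℤ := ∑ i ∈ G, ε i with hT
  have hcast : ((S * a + T * b : ℤ) : ZMod m) = 0 := by
    rw [← hsum, ← Finset.sum_filter_add_sum_filter_not J (fun i : Fin (4 * p) => (i : ℕ) < 2 * p)]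
    push_cast [hS, hT, Finset.sum_mul]
    congr 1
    · exact Finset.sum_congr rfl fun i hi => by
        rw [if_pos (Finset.mem_filter.mp hi).2]
    · exact Finset.sum_congr rfl fun i hi => by
        rw [if_neg (Finset.mem_filter.mp hi).2]
  have habs : ∀ (H : Finset (Fin (4 * p))), |∑ i ∈ H, ε i| ≤ (H.card : ℤ) := by
    intro H
    have h1 : ∑ i ∈ H, |ε i| = ∑ _i ∈ H, (1 : ℤ) :=
      Finset.sum_congr rfl fun i _ => by rcases hε i with h | h <;> simp [h]
    calc |∑ i ∈ H, ε i| ≤ ∑ i ∈ H, |ε i| := Finset.abs_sum_le_sum_abs _ _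
      _ = (H.card : ℤ) := by rw [h1]; simp
  have hSj : |S| ≤ (j : ℤ) := by rw [← hj]; exact habs F
  have hTk : |T| ≤ (k : ℤ) := by rw [← hk]; exact habs G
  have hj2p : j ≤ 2 * p := by
    rw [← hj]
    calc F.card ≤ (Finset.univ.filter fun i : Fin (4 * p) => (i : ℕ) < 2 * p).card :=
          Finset.card_le_card (Finset.filter_subset_filter _ (Finset.subset_univ J))
      _ = 2 * p := filter_lt_card p
  have hk2p : k ≤ 2 * p := by
    have huniv : (Finset.univ.filter fun i : Fin (4 * p) => ¬ (i : ℕ) < 2 * p).card = 2 * p := by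
      have h1 := Finset.card_filter_add_card_filter_not
        (s := (Finset.univ : Finset (Fin (4 * p)))) (p := fun i : Fin (4 * p) => (i : ℕ) < 2 * p)
      rw [filter_lt_card p] at h1
      simp only [Finset.card_univ, Fintype.card_fin] at h1
      omega
    rw [← hk]
    calc G.card ≤ (Finset.univ.filter fun i : Fin (4 * p) => ¬ (i : ℕ) < 2 * p).card :=
          Finset.card_le_card (Finset.filter_subset_filter _ (Finset.subset_univ J))
      _ = 2 * p := huniv
  have hzero : S * a + T * b = 0 := by
    refine Int.eq_zero_of_abs_lt_dvd ((ZMod.intCast_zmod_eq_zero_iff_dvd _ _).mp hcast) ?_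
    calc |S * a + T * b| ≤ |S * a| + |T * b| := abs_add_le _ _
      _ = |S| * a + |T| * b := by rw [abs_mul, abs_mul]; simp
      _ ≤ (j : ℤ) * a + (k : ℤ) * b := by gcongr <;> positivity
      _ ≤ (2 * p : ℤ) * a + (2 * p : ℤ) * b := by
          gcongr <;> exact_mod_cast by omega
      _ = ((2 * p * (a + b) : ℕ) : ℤ) := by push_cast; ring
      _ < m := by exact_mod_cast hsize
  have hpar : ∀ (H : Finset (Fin (4 * p))), (∑ i ∈ H, ε i) % 2 = (H.card : ℤ) % 2 := by
    intro H
    have h1 : ∑ i ∈ H, ε i % 2 = ∑ _i ∈ H, (1 : ℤ) :=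
      Finset.sum_congr rfl fun i _ => by rcases hε i with h | h <;> simp [h]
    rw [Finset.sum_int_mod, h1]
    simp
  have hSpar : S % 2 = (j : ℤ) % 2 := by rw [hS, hpar F, hj]
  have hTpar : T % 2 = (k : ℤ) % 2 := by rw [hT, hpar G, hk]
  have hadvd : (a : ℤ) ∣ T * b := ⟨-S, by linear_combination hzero⟩
  have hco : IsCoprime (a : ℤ) (b : ℤ) := Nat.isCoprime_iff_coprime.mpr hab
  obtain ⟨u, hu⟩ := hco.dvd_of_dvd_mul_right hadvd
  have hSeq : S = -(u * b) := by
    have h0 : (a : ℤ) ≠ 0 := by positivity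
    have h1 : S * a = -(u * b) * a := by rw [hu] at hzero; linarith
    exact mul_right_cancel₀ h0 h1
  have hTodd : Odd T := by
    rw [Int.odd_iff, hTpar, ← Int.odd_iff]
    exact (Int.odd_coe_nat k).mpr hkodd
  have huodd : Odd u := (Int.odd_mul.mp (hu ▸ hTodd)).2
  have hune : u ≠ 0 := by rintro rfl; simp at huodd
  have hu1 : 1 ≤ |u| := Int.one_le_abs (by exact_mod_cast hune)
  have hbj : (b : ℤ) ≤ j := by
    calc (b : ℤ) = 1 * b := (one_mul _).symm
      _ ≤ |u| * b := by gcongr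
      _ = |S| := by rw [hSeq, abs_neg, abs_mul, Nat.abs_cast]
      _ ≤ j := hSj
  have hak : (a : ℤ) ≤ k := by
    calc (a : ℤ) = a * 1 := (mul_one _).symm
      _ ≤ a * |u| := by gcongr
      _ = |T| := by rw [hu, abs_mul, Nat.abs_cast]
      _ ≤ k := hTk
  have hSodd : Odd S ↔ Odd (b : ℤ) := by
    rw [hSeq, odd_neg, Int.odd_mul]
    exact ⟨fun h => h.2, fun h => ⟨huodd, h⟩⟩
  have hjodd : Odd j ↔ Odd b := by
    rw [← Int.odd_coe_nat, ← Int.odd_coe_nat]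
    rw [Int.odd_iff, Int.odd_iff, ← hSpar, ← Int.odd_iff, hSodd, Int.odd_iff]
  have hbj' : b ≤ j := by exact_mod_cast hbj
  have hak' : a ≤ k := by exact_mod_cast hak
  simp only [Nat.odd_iff] at hjodd hkodd haodd
  have hjb2 : j % 2 = b % 2 := by
    by_cases h : b % 2 = 1
    · have := hjodd.mpr h; omega
    · have : ¬ j % 2 = 1 := fun hh => h (hjodd.mp hh); omega
  refine ⟨hbj', hak', ?_, ?_⟩
  · rw [Nat.even_iff]; omega
  · rw [Nat.even_iff]; omega

lemma typed_pairing_lt {p : ℕ} (n : ℕ) (S : Finset (Fin (4 * p)))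
    (hS : ∀ i ∈ S, (i : ℕ) < 2 * p) (hcard : S.card = 2 * n) :
    ∃ 𝒞 : Finset (Finset (Fin (4 * p))),
      (𝒞 : Set (Finset (Fin (4 * p)))).PairwiseDisjoint id ∧ 𝒞.sup id = S ∧
      (∀ B ∈ 𝒞, IsType B 2 0) ∧ 𝒞.card = n := by
  obtain ⟨𝒞, hd, hsup, hc2, hcn⟩ := pairing n S hcard
  refine ⟨𝒞, hd, hsup, fun B hB => ?_, hcn⟩
  have hBS : B ⊆ S := hsup ▸ (Finset.le_sup (f := id) hB : B ⊆ _)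
  have hall : ∀ i ∈ B, (i : ℕ) < 2 * p := fun i hi => hS i (hBS hi)
  constructor
  · rw [Finset.filter_true_of_mem hall]; exact hc2 B hB
  · rw [Finset.filter_false_of_mem fun i hi => Nat.not_le.mpr (hall i hi), Finset.card_empty]

lemma typed_pairing_ge {p : ℕ} (n : ℕ) (S : Finset (Fin (4 * p)))
    (hS : ∀ i ∈ S, ¬ (i : ℕ) < 2 * p) (hcard : S.card = 2 * n) :
    ∃ 𝒞 : Finset (Finset (Fin (4 * p))),
      (𝒞 : Set (Finset (Fin (4 * p)))).PairwiseDisjoint id ∧ 𝒞.sup id = S ∧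
      (∀ B ∈ 𝒞, IsType B 0 2) ∧ 𝒞.card = n := by
  obtain ⟨𝒞, hd, hsup, hc2, hcn⟩ := pairing n S hcard
  refine ⟨𝒞, hd, hsup, fun B hB => ?_, hcn⟩
  have hBS : B ⊆ S := hsup ▸ (Finset.le_sup (f := id) hB : B ⊆ _)
  have hall : ∀ i ∈ B, ¬ (i : ℕ) < 2 * p := fun i hi => hS i (hBS hi)
  constructor
  · rw [Finset.filter_false_of_mem hall, Finset.card_empty]
  · rw [Finset.filter_true_of_mem fun i hi => Nat.not_lt.mp (hall i hi)]; exact hc2 B hB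

lemma merge_families {p : ℕ} (𝒞₁ 𝒞₂ : Finset (Finset (Fin (4 * p))))
    (S₁ S₂ : Finset (Fin (4 * p)))
    (hd₁ : (𝒞₁ : Set (Finset (Fin (4 * p)))).PairwiseDisjoint id)
    (hd₂ : (𝒞₂ : Set (Finset (Fin (4 * p)))).PairwiseDisjoint id)
    (hsup₁ : 𝒞₁.sup id = S₁) (hsup₂ : 𝒞₂.sup id = S₂)
    (ht₁ : ∀ B ∈ 𝒞₁, IsType B 2 0) (ht₂ : ∀ B ∈ 𝒞₂, IsType B 0 2)
    (hS : Disjoint S₁ S₂) :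
    ((𝒞₁ ∪ 𝒞₂ : Finset (Finset (Fin (4 * p)))) :
        Set (Finset (Fin (4 * p)))).PairwiseDisjoint id ∧
      (𝒞₁ ∪ 𝒞₂).sup id = S₁ ∪ S₂ ∧
      ((𝒞₁ ∪ 𝒞₂).filter fun B => IsType B 2 0) = 𝒞₁ ∧
      ((𝒞₁ ∪ 𝒞₂).filter fun B => IsType B 0 2) = 𝒞₂ := by
  have hsub₁ : ∀ B ∈ 𝒞₁, B ⊆ S₁ := fun B hB => hsup₁ ▸ (Finset.le_sup (f := id) hB : B ⊆ _)
  have hsub₂ : ∀ B ∈ 𝒞₂, B ⊆ S₂ := fun B hB => hsup₂ ▸ (Finset.le_sup (f := id) hB : B ⊆ _)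
  refine ⟨?_, ?_, ?_, ?_⟩
  · rw [Finset.coe_union]
    rw [Set.pairwiseDisjoint_union]
    refine ⟨hd₁, hd₂, fun B hB C hC _ => ?_⟩
    exact hS.mono (hsub₁ B hB) (hsub₂ C hC)
  · rw [Finset.sup_union, hsup₁, hsup₂]; rfl
  · ext B
    rw [Finset.mem_filter, Finset.mem_union]
    constructor
    · rintro ⟨h | h, ht⟩
      · exact h
      · have h1 := (ht₂ B h).1
        have h2 := ht.1
        omega
    · intro h; exact ⟨Or.inl h, ht₁ B h⟩
  · ext B
    rw [Finset.mem_filter, Finset.mem_union]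
    constructor
    · rintro ⟨h | h, ht⟩
      · have h1 := (ht₁ B h).1
        have h2 := ht.1
        omega
      · exact h
    · intro h; exact ⟨Or.inr h, ht₂ B h⟩

/-- Decomposition of `ξ`-subsets for `ξ = (a,…,a,b,…,b)` (`2p` copies each), where
`a`, `b` are coprime positive integers, `a` odd, `2p(a+b) < m`:
(a) if `j` and `k` are even, then `J` of type `(j,k)` is a disjoint union of `j/2`
subsets of type `(2,0)` and `k/2` subsets of type `(0,2)`;
(b) `k` is odd iff `J` is a disjoint union of one subset of type `(b,a)` together with
subsets of type `(2,0)` and of type `(0,2)`. -/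
theorem stmt_17 (m : ℕ) (hm : Nat.Prime m) (p : ℕ) (hp : 0 < p)
    (a b : ℕ) (ha : 0 < a) (hb : 0 < b) (hab : Nat.Coprime a b) (haodd : Odd a)
    (hsize : 2 * p * (a + b) < m) (j k : ℕ)
    (J : Finset (Fin (4 * p)))
    (hJ : XiSubset (fun i => if (i : ℕ) < 2 * p then (a : ZMod m) else (b : ZMod m)) J)
    (htype : IsType J j k) :
    (Even j → Even k →
      ∃ 𝒞 : Finset (Finset (Fin (4 * p))),
        (𝒞 : Set (Finset (Fin (4 * p)))).PairwiseDisjoint id ∧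
        𝒞.sup id = J ∧
        (∀ B ∈ 𝒞, IsType B 2 0 ∨ IsType B 0 2) ∧
        (𝒞.filter fun B => IsType B 2 0).card = j / 2 ∧
        (𝒞.filter fun B => IsType B 0 2).card = k / 2) ∧
    (Odd k ↔
      ∃ (B : Finset (Fin (4 * p))) (𝒞 : Finset (Finset (Fin (4 * p)))),
        B ∉ 𝒞 ∧
        ((insert B 𝒞 : Finset (Finset (Fin (4 * p)))) :
            Set (Finset (Fin (4 * p)))).PairwiseDisjoint id ∧
        (insert B 𝒞).sup id = J ∧
        IsType B b a ∧
        (∀ C ∈ 𝒞, IsType C 2 0 ∨ IsType C 0 2)) := by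
  obtain ⟨hj, hk⟩ := htype
  set F := J.filter fun i : Fin (4 * p) => (i : ℕ) < 2 * p with hF
  set G := J.filter fun i : Fin (4 * p) => ¬ (i : ℕ) < 2 * p with hG
  have hGeq : J.filter (fun i : Fin (4 * p) => 2 * p ≤ (i : ℕ)) = G := by
    rw [hG]
    exact Finset.filter_congr fun i _ => by rw [Nat.not_lt]
  have hk' : G.card = k := by rw [← hGeq]; exact hk
  have hFG : Disjoint F G := Finset.disjoint_filter_filter_not J J _
  have hFunion : F ∪ G = J := Finset.filter_union_filter_not_eq _ J
  have hFmem : ∀ i ∈ F, (i : ℕ) < 2 * p := fun i hi => (Finset.mem_filter.mp hi).2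
  have hGmem : ∀ i ∈ G, ¬ (i : ℕ) < 2 * p := fun i hi => (Finset.mem_filter.mp hi).2
  constructor
  · -- part (a)
    intro hje hke
    obtain ⟨n₁, hn₁⟩ := hje
    obtain ⟨n₂, hn₂⟩ := hke
    obtain ⟨𝒞₁, hd₁, hsup₁, ht₁, hcn₁⟩ := typed_pairing_lt n₁ F hFmem (by rw [hj]; omega)
    obtain ⟨𝒞₂, hd₂, hsup₂, ht₂, hcn₂⟩ := typed_pairing_ge n₂ G hGmem (by rw [hk']; omega)
    obtain ⟨hpd, hsup, hf1, hf2⟩ := merge_families 𝒞₁ 𝒞₂ F G hd₁ hd₂ hsup₁ hsup₂ ht₁ ht₂ hFG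
    refine ⟨𝒞₁ ∪ 𝒞₂, hpd, by rw [hsup, hFunion], fun B hB => ?_, ?_, ?_⟩
    · rcases Finset.mem_union.mp hB with h | h
      · exact Or.inl (ht₁ B h)
      · exact Or.inr (ht₂ B h)
    · rw [hf1, hcn₁]; omega
    · rw [hf2, hcn₂]; omega
  · constructor
    · -- forward: Odd k → decomposition
      intro hkodd
      obtain ⟨hbj, hak, hjb, hka⟩ :=
        key_nt m p a b ha hb hab haodd hsize j k J hJ hj hk' hkodd
      obtain ⟨B₁, hB₁sub, hB₁card⟩ := Finset.exists_subset_card_eq (s := F) (n := b) (by rw [hj]; exact hbj)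
      obtain ⟨B₂, hB₂sub, hB₂card⟩ := Finset.exists_subset_card_eq (s := G) (n := a) (by rw [hk']; exact hak)
      obtain ⟨n₁, hn₁⟩ := hjb
      obtain ⟨n₂, hn₂⟩ := hka
      have hFd : (F \ B₁).card = 2 * n₁ := by
        rw [Finset.card_sdiff_of_subset hB₁sub, hB₁card, hj]; omega
      have hGd : (G \ B₂).card = 2 * n₂ := by
        rw [Finset.card_sdiff_of_subset hB₂sub, hB₂card, hk']; omega
      obtain ⟨𝒞₁, hd₁, hsup₁, ht₁, hcn₁⟩ := typed_pairing_lt n₁ (F \ B₁)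
        (fun i hi => hFmem i (Finset.mem_sdiff.mp hi).1) hFd
      obtain ⟨𝒞₂, hd₂, hsup₂, ht₂, hcn₂⟩ := typed_pairing_ge n₂ (G \ B₂)
        (fun i hi => hGmem i (Finset.mem_sdiff.mp hi).1) hGd
      obtain ⟨hpd, hsupU, hf1, hf2⟩ := merge_families 𝒞₁ 𝒞₂ (F \ B₁) (G \ B₂)
        hd₁ hd₂ hsup₁ hsup₂ ht₁ ht₂
        (hFG.mono (Finset.sdiff_subset) (Finset.sdiff_subset))
      have hB₁F : ∀ i ∈ B₁, (i : ℕ) < 2 * p := fun i hi => hFmem i (hB₁sub hi)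
      have hB₂G : ∀ i ∈ B₂, ¬ (i : ℕ) < 2 * p := fun i hi => hGmem i (hB₂sub hi)
      have hdisjB : Disjoint (B₁ ∪ B₂) ((F \ B₁) ∪ (G \ B₂)) := by
        rw [Finset.disjoint_left]
        intro z hz hz'
        rcases Finset.mem_union.mp hz with h | h <;>
          rcases Finset.mem_union.mp hz' with h' | h'
        · exact (Finset.mem_sdiff.mp h').2 h
        · exact Finset.disjoint_left.mp hFG (hB₁sub h) (Finset.mem_sdiff.mp h').1
        · exact Finset.disjoint_left.mp hFG (Finset.mem_sdiff.mp h').1 (hB₂sub h)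
        · exact (Finset.mem_sdiff.mp h').2 h
      refine ⟨B₁ ∪ B₂, 𝒞₁ ∪ 𝒞₂, ?_, ?_, ?_, ?_, ?_⟩
      · intro hmem
        have hBsub : B₁ ∪ B₂ ⊆ (F \ B₁) ∪ (G \ B₂) :=
          hsupU ▸ (Finset.le_sup (f := id) hmem : B₁ ∪ B₂ ⊆ _)
        obtain ⟨x, hx⟩ : B₂.Nonempty := Finset.card_pos.mp (by rw [hB₂card]; exact ha)
        have hxB : x ∈ B₁ ∪ B₂ := Finset.mem_union_right _ hx
        exact Finset.disjoint_left.mp hdisjB hxB (hBsub hxB)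
      · rw [Finset.coe_insert]
        refine Set.PairwiseDisjoint.insert hpd fun C hC _ => ?_
        have hCsub : C ⊆ (F \ B₁) ∪ (G \ B₂) :=
          hsupU ▸ (Finset.le_sup (f := id) hC : C ⊆ _)
        exact hdisjB.mono_right hCsub
      · rw [Finset.sup_insert, hsupU, ← hFunion]
        ext z
        simp only [id, Finset.sup_eq_union, Finset.mem_union, Finset.mem_sdiff]
        have h1 := @hB₁sub z
        have h2 := @hB₂sub z
        constructor
        · rintro ((h | h) | (⟨h, _⟩ | ⟨h, _⟩))
          · exact Or.inl (h1 h)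
          · exact Or.inr (h2 h)
          · exact Or.inl h
          · exact Or.inr h
        · rintro (h | h)
          · by_cases hz : z ∈ B₁
            · exact Or.inl (Or.inl hz)
            · exact Or.inr (Or.inl ⟨h, hz⟩)
          · by_cases hz : z ∈ B₂
            · exact Or.inl (Or.inr hz)
            · exact Or.inr (Or.inr ⟨h, hz⟩)
      · constructor
        · rw [Finset.filter_union, Finset.filter_true_of_mem hB₁F,
            Finset.filter_false_of_mem hB₂G, Finset.union_empty, hB₁card]
        · rw [Finset.filter_union,
            Finset.filter_false_of_mem (fun i hi => Nat.not_le.mpr (hB₁F i hi)),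
            Finset.filter_true_of_mem (fun i hi => Nat.not_lt.mp (hB₂G i hi)),
            Finset.empty_union, hB₂card]
      · intro C hC
        rcases Finset.mem_union.mp hC with h | h
        · exact Or.inl (ht₁ C h)
        · exact Or.inr (ht₂ C h)
    · -- backward: decomposition → Odd k
      rintro ⟨B, 𝒞, hBnot, hpd, hsup, hBtype, hCtypes⟩
      have hkey := card_filter_sup (insert B 𝒞) hpd (fun i : Fin (4 * p) => 2 * p ≤ (i : ℕ))
      rw [hsup, hk, Finset.sum_insert hBnot, hBtype.2] at hkey
      have h2 : 2 ∣ ∑ C ∈ 𝒞, (C.filter fun i : Fin (4 * p) => 2 * p ≤ (i : ℕ)).card := by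
        refine Finset.dvd_sum fun C hC => ?_
        rcases hCtypes C hC with h | h
        · simp [h.2]
        · simp [h.2]
      obtain ⟨t, ht⟩ := h2
      rw [Nat.odd_iff]
      rw [Nat.odd_iff] at haodd
      omega
end

section
/- Let m be a prime, p a positive integer, and a, b coprime positive integers with a odd and 2p(a + b) < m; set d = a + b − 2. Let ξ be the sequence in F_m of length 4p with 2p copies of a followed by 2p copies of b, and let P be a ξ-partition of {1, …, 4p} of length ℓ with b(P) = 2n. Then ℓ ≤ 2p − n·d, and ℓ = 2p − n·d if and only if P has exactly 2n blocks of type (b, a), p − n·b blocks of type (2,0), and p − n·a blocks of type (0,2). -/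
/-- `b(P)`: the number of blocks of `P` whose type `(j, k)` has `k` odd. -/
def bP {p : ℕ} (P : Finpartition (Finset.univ : Finset (Fin (4 * p)))) : ℕ :=
  (P.parts.filter fun J =>
    Odd (J.filter fun i : Fin (4 * p) => 2 * p ≤ (i : ℕ)).card).card

section Aux

open Finset

/-- Number of elements of `J` in the first half. -/
def jc {p : ℕ} (J : Finset (Fin (4*p))) : ℕ :=
  (J.filter fun i : Fin (4*p) => (i:ℕ) < 2*p).card

/-- Number of elements of `J` in the second half. -/
def kc {p : ℕ} (J : Finset (Fin (4*p))) : ℕ :=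
  (J.filter fun i : Fin (4*p) => 2*p ≤ (i:ℕ)).card

lemma isType_iff {p : ℕ} (J : Finset (Fin (4*p))) (j k : ℕ) :
    IsType J j k ↔ jc J = j ∧ kc J = k := Iff.rfl

lemma jc_add_kc {p : ℕ} (J : Finset (Fin (4*p))) : jc J + kc J = J.card := by
  unfold jc kc
  rw [show (J.filter fun i : Fin (4*p) => 2*p ≤ (i:ℕ))
      = J.filter fun i : Fin (4*p) => ¬ ((i:ℕ) < 2*p) by
    apply filter_congr; intro i _; simp [not_lt]]
  exact Finset.card_filter_add_card_filter_not _

lemma card_first_half {p : ℕ} :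
    ((univ : Finset (Fin (4*p))).filter fun i : Fin (4*p) => (i:ℕ) < 2*p).card = 2*p := by
  have h : (2*p) ≤ 4*p := by omega
  have e : ((univ : Finset (Fin (4*p))).filter fun i : Fin (4*p) => (i:ℕ) < 2*p)
      = (univ : Finset (Fin (2*p))).map (Fin.castLEEmb h) := by
    ext i
    simp only [mem_filter, mem_univ, true_and, mem_map]
    constructor
    · intro hi; exact ⟨⟨i, hi⟩, rfl⟩
    · rintro ⟨y, rfl⟩; exact y.isLt
  rw [e, card_map, card_univ, Fintype.card_fin]

lemma card_second_half {p : ℕ} :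
    ((univ : Finset (Fin (4*p))).filter fun i : Fin (4*p) => 2*p ≤ (i:ℕ)).card = 2*p := by
  have h1 := jc_add_kc (p := p) univ
  unfold jc kc at h1
  rw [card_first_half] at h1
  simp only [card_univ, Fintype.card_fin] at h1
  omega

lemma sum_filter_parts {p : ℕ} (P : Finpartition (univ : Finset (Fin (4*p))))
    (pr : Fin (4*p) → Prop) [DecidablePred pr] :
    ∑ J ∈ P.parts, (J.filter pr).card = (univ.filter pr).card := by
  have h1 : (univ : Finset (Fin (4*p))) = P.parts.biUnion id := by
    rw [← Finset.sup_eq_biUnion, P.sup_parts]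
  have h2 : (univ.filter pr).card = ((P.parts.biUnion id).filter pr).card := by
    conv_lhs => rw [h1]
  rw [h2, Finset.filter_biUnion, Finset.card_biUnion]
  · simp
  · intro x hx y hy hxy
    exact Finset.disjoint_filter_filter (P.disjoint hx hy hxy)

lemma sum_jc {p : ℕ} (P : Finpartition (univ : Finset (Fin (4*p)))) :
    ∑ J ∈ P.parts, jc J = 2*p := by
  unfold jc
  rw [sum_filter_parts, card_first_half]

lemma sum_kc {p : ℕ} (P : Finpartition (univ : Finset (Fin (4*p)))) :
    ∑ J ∈ P.parts, kc J = 2*p := by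
  unfold kc
  rw [sum_filter_parts, card_second_half]

lemma block_struct (m : ℕ) (p a b : ℕ) (hb : 0 < b)
    (hab : Nat.Coprime a b) (hsize : 2*p*(a+b) < m)
    (J : Finset (Fin (4*p)))
    (hJ : XiSubset (fun i : Fin (4*p) => if (i:ℕ) < 2*p then (a : ZMod m) else (b : ZMod m)) J) :
    ∃ t : ℤ, t.natAbs * b ≤ jc J ∧ t.natAbs * a ≤ kc J ∧
      (2:ℤ) ∣ (jc J : ℤ) - t * b ∧ (2:ℤ) ∣ (kc J : ℤ) + t * a := by
  obtain ⟨ε, hε, hsum⟩ := hJ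
  set J1 := J.filter fun i : Fin (4*p) => (i:ℕ) < 2*p with hJ1
  set J2 := J.filter fun i : Fin (4*p) => 2*p ≤ (i:ℕ) with hJ2
  set s : ℤ := ∑ i ∈ J1, ε i with hs
  set u : ℤ := ∑ i ∈ J2, ε i with hu
  have hsplit : ∑ j ∈ J, (ε j : ZMod m) *
      (if (j:ℕ) < 2*p then (a : ZMod m) else (b : ZMod m))
      = (s : ZMod m) * a + (u : ZMod m) * b := by
    rw [← Finset.sum_filter_add_sum_filter_not J (fun i : Fin (4*p) => (i:ℕ) < 2*p)]
    have e1 : ∀ j ∈ J1, (ε j : ZMod m) *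
        (if (j:ℕ) < 2*p then (a : ZMod m) else (b : ZMod m)) = (ε j : ZMod m) * a := by
      intro j hj; rw [if_pos (mem_filter.mp hj).2]
    have e2 : ∀ j ∈ J.filter fun i : Fin (4*p) => ¬ ((i:ℕ) < 2*p), (ε j : ZMod m) *
        (if (j:ℕ) < 2*p then (a : ZMod m) else (b : ZMod m)) = (ε j : ZMod m) * b := by
      intro j hj; rw [if_neg (mem_filter.mp hj).2]
    rw [Finset.sum_congr rfl e1, Finset.sum_congr rfl e2]
    rw [← Finset.sum_mul, ← Finset.sum_mul]
    have e3 : (J.filter fun i : Fin (4*p) => ¬ ((i:ℕ) < 2*p)) = J2 := by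
      apply filter_congr; intro i _; simp [not_lt]
    rw [e3, hs, hu]
    push_cast
    ring
  rw [hsplit] at hsum
  have hdvd : (m : ℤ) ∣ s * a + u * b := by
    rw [← ZMod.intCast_zmod_eq_zero_iff_dvd]
    push_cast
    exact hsum
  have habs_s : |s| ≤ (J1.card : ℤ) := by
    calc |s| ≤ ∑ i ∈ J1, |ε i| := Finset.abs_sum_le_sum_abs _ _
    _ = ∑ i ∈ J1, 1 := by
        apply Finset.sum_congr rfl; intro i _; rcases hε i with h | h <;> simp [h]
    _ = (J1.card : ℤ) := by simp
  have habs_u : |u| ≤ (J2.card : ℤ) := by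
    calc |u| ≤ ∑ i ∈ J2, |ε i| := Finset.abs_sum_le_sum_abs _ _
    _ = ∑ i ∈ J2, 1 := by
        apply Finset.sum_congr rfl; intro i _; rcases hε i with h | h <;> simp [h]
    _ = (J2.card : ℤ) := by simp
  have hJ1card : J1.card ≤ 2*p := by
    rw [← card_first_half (p := p)]
    exact Finset.card_le_card (Finset.filter_subset_filter _ (Finset.subset_univ J))
  have hJ2card : J2.card ≤ 2*p := by
    rw [← card_second_half (p := p)]
    exact Finset.card_le_card (Finset.filter_subset_filter _ (Finset.subset_univ J))
  have hzero : s * a + u * b = 0 := by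
    apply Int.eq_zero_of_abs_lt_dvd hdvd
    have h1 : |s * a + u * b| ≤ |s| * a + |u| * b := by
      calc |s * a + u * b| ≤ |s * a| + |u * b| := abs_add_le _ _
      _ = |s| * a + |u| * b := by rw [abs_mul, abs_mul]; simp
    have h2 : |s| * (a:ℤ) + |u| * b ≤ (2*p) * a + (2*p) * b := by
      have hsle : |s| ≤ ((2*p : ℕ) : ℤ) := habs_s.trans (Nat.cast_le.mpr hJ1card)
      have hule : |u| ≤ ((2*p : ℕ) : ℤ) := habs_u.trans (Nat.cast_le.mpr hJ2card)
      push_cast at hsle hule ⊢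
      nlinarith [abs_nonneg s, abs_nonneg u]
    have h3 : ((2*p) * a + (2*p) * b : ℤ) < m := by
      have : ((2*p*(a+b) : ℕ) : ℤ) < (m : ℤ) := by exact_mod_cast hsize
      push_cast at this ⊢
      linarith
    calc |s * a + u * b| ≤ |s| * a + |u| * b := h1
    _ ≤ (2*p) * a + (2*p) * b := h2
    _ < m := h3
  have hco : IsCoprime (b : ℤ) (a : ℤ) := by
    rw [Int.isCoprime_iff_gcd_eq_one]
    simpa [Int.gcd] using hab.symm
  have hbdvd : (b : ℤ) ∣ s := by
    apply hco.dvd_of_dvd_mul_right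
    exact ⟨-u, by linarith [hzero]⟩
  obtain ⟨t, ht⟩ := hbdvd
  have hu_eq : u = -t * a := by
    have hbne : (b : ℤ) ≠ 0 := by exact_mod_cast hb.ne'
    have h0 : (b:ℤ) * (t * a + u) = 0 := by rw [ht] at hzero; ring_nf; ring_nf at hzero; linarith
    rcases mul_eq_zero.mp h0 with h | h
    · exact absurd h hbne
    · linarith
  refine ⟨t, ?_, ?_, ?_, ?_⟩
  · have e : |s| = t.natAbs * b := by rw [ht, abs_mul]; simp [abs_of_nonneg, mul_comm]
    have h := habs_s; rw [e] at h
    exact_mod_cast h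
  · have e : |u| = t.natAbs * a := by rw [hu_eq, abs_mul]; simp [abs_mul]
    have h := habs_u; rw [e] at h
    exact_mod_cast h
  · rw [← mul_comm (b:ℤ) t, ← ht]
    have e : (J1.card : ℤ) - s = ∑ i ∈ J1, (1 - ε i) := by
      rw [Finset.sum_sub_distrib]; simp [hs]
    rw [show (jc J : ℤ) = (J1.card : ℤ) from rfl, e]
    apply Finset.dvd_sum
    intro i _
    rcases hε i with h | h <;> simp [h]
  · have e0 : (J2.card : ℤ) + t * a = (J2.card : ℤ) - u := by rw [hu_eq]; ring
    rw [show (kc J : ℤ) = (J2.card : ℤ) from rfl, e0]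
    have e : (J2.card : ℤ) - u = ∑ i ∈ J2, (1 - ε i) := by
      rw [Finset.sum_sub_distrib]; simp [hu]
    rw [e]
    apply Finset.dvd_sum
    intro i _
    rcases hε i with h | h <;> simp [h]

lemma odd_case (a b j k : ℕ) (t : ℤ)
    (h1 : t.natAbs * b ≤ j) (h2 : t.natAbs * a ≤ k)
    (h4 : (2:ℤ) ∣ (k:ℤ) + t * a) (hk : Odd k) : b ≤ j ∧ a ≤ k := by
  have ht0 : t ≠ 0 := by
    rintro rfl
    simp only [zero_mul, add_zero] at h4
    have : Even (k:ℤ) := even_iff_two_dvd.mpr h4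
    have : Even k := by exact_mod_cast this
    exact (Nat.not_even_iff_odd.mpr hk) this
  have h1' : 1 ≤ t.natAbs := Nat.one_le_iff_ne_zero.mpr (Int.natAbs_ne_zero.mpr ht0)
  constructor
  · calc b = 1 * b := (one_mul b).symm
    _ ≤ t.natAbs * b := Nat.mul_le_mul_right b h1'
    _ ≤ j := h1
  · calc a = 1 * a := (one_mul a).symm
    _ ≤ t.natAbs * a := Nat.mul_le_mul_right a h1'
    _ ≤ k := h2

lemma even_case (a b j k : ℕ) (haodd : Odd a) (t : ℤ)
    (h3 : (2:ℤ) ∣ (j:ℤ) - t * b) (h4 : (2:ℤ) ∣ (k:ℤ) + t * a)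
    (hk : ¬ Odd k) (hne : 1 ≤ j + k) :
    2 ≤ j + k ∧ (j + k = 2 → (j = 2 ∧ k = 0) ∨ (j = 0 ∧ k = 2)) := by
  have hkeven : Even k := Nat.not_odd_iff_even.mp hk
  have hkz : Even (k:ℤ) := by exact_mod_cast hkeven
  have hta : Even (t * a) := by
    have : Even ((k:ℤ) + t * a) := even_iff_two_dvd.mpr h4
    rcases this with ⟨c, hc⟩
    rcases hkz with ⟨d, hd⟩
    exact ⟨c - d, by omega⟩
  have hteven : Even t := by
    rcases Int.even_mul.mp hta with h | h
    · exact h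
    · exfalso
      have : Odd (a:ℤ) := by exact_mod_cast haodd
      exact (Int.not_odd_iff_even.mpr h) this
  have htb : Even (t * b) := hteven.mul_right b
  have hjeven : Even j := by
    have : Even ((j:ℤ) - t * b) := even_iff_two_dvd.mpr h3
    rcases this with ⟨c, hc⟩
    rcases htb with ⟨d, hd⟩
    have : Even (j:ℤ) := ⟨c + d, by omega⟩
    exact_mod_cast this
  rcases hjeven with ⟨j', hj'⟩
  rcases hkeven with ⟨k', hk'⟩
  omega

end Aux

/-- With `d = a + b − 2`, a `ξ`-partition `P` of length `ℓ` with `b(P) = 2n` satisfies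
`ℓ ≤ 2p − nd`, with equality iff `P` has exactly `2n` blocks of type `(b, a)`,
`p − nb` blocks of type `(2, 0)` and `p − na` blocks of type `(0, 2)`. -/
theorem stmt_18 (m : ℕ) (hm : Nat.Prime m) (p : ℕ) (hp : 0 < p)
    (a b : ℕ) (ha : 0 < a) (hb : 0 < b) (hab : Nat.Coprime a b) (haodd : Odd a)
    (hsize : 2 * p * (a + b) < m) (n : ℕ)
    (P : Finpartition (Finset.univ : Finset (Fin (4 * p))))
    (hP : XiPartition (fun i => if (i : ℕ) < 2 * p then (a : ZMod m) else (b : ZMod m)) P)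
    (hbP : bP P = 2 * n) :
    P.parts.card + n * (a + b - 2) ≤ 2 * p ∧
    (P.parts.card + n * (a + b - 2) = 2 * p ↔
      (P.parts.filter fun J => IsType J b a).card = 2 * n ∧
      (P.parts.filter fun J => IsType J 2 0).card + n * b = p ∧
      (P.parts.filter fun J => IsType J 0 2).card + n * a = p) := by
  classical
  set S := P.parts with hS
  have key : ∀ J ∈ S, ∃ t : ℤ, t.natAbs * b ≤ jc J ∧ t.natAbs * a ≤ kc J ∧
      (2:ℤ) ∣ (jc J : ℤ) - t * b ∧ (2:ℤ) ∣ (kc J : ℤ) + t * a :=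
    fun J hJ => block_struct m p a b hb hab hsize J (hP J hJ)
  have hne : ∀ J ∈ S, 1 ≤ jc J + kc J := by
    intro J hJ
    rw [jc_add_kc]
    exact Finset.card_pos.mpr (P.nonempty_of_mem_parts hJ)
  have hodd : ∀ J ∈ S, Odd (kc J) → b ≤ jc J ∧ a ≤ kc J := by
    intro J hJ hk
    obtain ⟨t, h1, h2, h3, h4⟩ := key J hJ
    exact odd_case a b _ _ t h1 h2 h4 hk
  have heven : ∀ J ∈ S, ¬ Odd (kc J) → 2 ≤ jc J + kc J ∧
      (jc J + kc J = 2 → (jc J = 2 ∧ kc J = 0) ∨ (jc J = 0 ∧ kc J = 2)) := by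
    intro J hJ hk
    obtain ⟨t, h1, h2, h3, h4⟩ := key J hJ
    exact even_case a b _ _ haodd t h3 h4 hk (hne J hJ)
  have hO : (S.filter fun J => Odd (kc J)).card = 2 * n := hbP
  have hOle : 2 * n ≤ S.card := hO ▸ Finset.card_filter_le _ _
  have hw : ∀ J ∈ S, (if Odd (kc J) then a + b else 2) ≤ jc J + kc J := by
    intro J hJ
    by_cases hk : Odd (kc J)
    · simp only [if_pos hk]
      obtain ⟨hbj, hak⟩ := hodd J hJ hk
      omega
    · simp only [if_neg hk]
      exact (heven J hJ hk).1
  have hsumw : ∑ J ∈ S, (if Odd (kc J) then a + b else 2)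
      = 2 * (n * (a + b)) + 2 * (S.card - 2 * n) := by
    rw [Finset.sum_ite, Finset.sum_const, Finset.sum_const, hO]
    have hc : (S.filter fun J => ¬ Odd (kc J)).card = S.card - 2 * n := by
      have := Finset.card_filter_add_card_filter_not
        (s := S) (p := fun J => Odd (kc J))
      omega
    rw [hc, smul_eq_mul, smul_eq_mul]
    ring
  have hsum4p : ∑ J ∈ S, (jc J + kc J) = 4 * p := by
    rw [Finset.sum_add_distrib, sum_jc, sum_kc]; omega
  have hineq : 2 * (n * (a + b)) + 2 * (S.card - 2 * n) ≤ 4 * p := by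
    have h := Finset.sum_le_sum hw
    rwa [hsumw, hsum4p] at h
  have hkeyid : n * (a + b - 2) + 2 * n = n * (a + b) := by
    have h2 : 2 ≤ a + b := by omega
    calc n * (a + b - 2) + 2 * n = n * ((a + b - 2) + 2) := by ring
    _ = n * (a + b) := by rw [Nat.sub_add_cancel h2]
  have hsplit2 : n * (a + b) = n * a + n * b := by ring
  constructor
  · generalize hA : n * (a + b) = A at hineq hkeyid
    generalize hq : n * (a + b - 2) = q at hkeyid ⊢
    omega
  constructor
  · -- equality implies counts
    intro heq
    have hsumweq : ∑ J ∈ S, (if Odd (kc J) then a + b else 2) = ∑ J ∈ S, (jc J + kc J) := by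
      rw [hsumw, hsum4p]
      generalize hA : n * (a + b) = A at hkeyid ⊢
      generalize hq : n * (a + b - 2) = q at hkeyid heq
      omega
    have hall := (Finset.sum_eq_sum_iff_of_le hw).mp hsumweq
    have hOba : ∀ J ∈ S, Odd (kc J) → jc J = b ∧ kc J = a := by
      intro J hJ hk
      have h := hall J hJ
      rw [if_pos hk] at h
      obtain ⟨hbj, hak⟩ := hodd J hJ hk
      omega
    have hEtype : ∀ J ∈ S, ¬ Odd (kc J) → (jc J = 2 ∧ kc J = 0) ∨ (jc J = 0 ∧ kc J = 2) := by
      intro J hJ hk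
      have h := hall J hJ
      rw [if_neg hk] at h
      exact (heven J hJ hk).2 h.symm
    have hfba : S.filter (fun J => IsType J b a) = S.filter fun J => Odd (kc J) := by
      ext J
      simp only [Finset.mem_filter, isType_iff]
      constructor
      · rintro ⟨hJ, hjb, hka⟩
        exact ⟨hJ, hka ▸ haodd⟩
      · rintro ⟨hJ, hk⟩
        exact ⟨hJ, (hOba J hJ hk).1, (hOba J hJ hk).2⟩
    refine ⟨by rw [hfba, hO], ?_, ?_⟩
    · -- type (2,0) count
      have hsplit := Finset.sum_filter_add_sum_filter_not S (fun J => Odd (kc J)) jc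
      have e1 : ∑ J ∈ S.filter (fun J => Odd (kc J)), jc J = 2 * (n * b) := by
        rw [Finset.sum_congr rfl (fun J hJ => (hOba J (Finset.mem_filter.mp hJ).1
          (Finset.mem_filter.mp hJ).2).1), Finset.sum_const, hO, smul_eq_mul]
        ring
      have e2 : ∑ J ∈ S.filter (fun J => ¬ Odd (kc J)), jc J
          = 2 * (S.filter (fun J => IsType J 2 0)).card := by
        have ec : ∀ J ∈ S.filter (fun J => ¬ Odd (kc J)),
            jc J = if IsType J 2 0 then 2 else 0 := by
          intro J hJ
          obtain ⟨hJS, hk⟩ := Finset.mem_filter.mp hJ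
          rcases hEtype J hJS hk with ⟨h1, h2⟩ | ⟨h1, h2⟩
          · rw [if_pos ((isType_iff J 2 0).mpr ⟨h1, h2⟩), h1]
          · rw [if_neg, h1]
            rw [isType_iff]
            omega
        rw [Finset.sum_congr rfl ec, Finset.sum_ite, Finset.sum_const, Finset.sum_const,
          smul_eq_mul, smul_eq_mul, Finset.filter_filter]
        have ef : S.filter (fun J => ¬ Odd (kc J) ∧ IsType J 2 0)
            = S.filter (fun J => IsType J 2 0) := by
          apply Finset.filter_congr
          intro J _
          simp only [isType_iff, iff_self_and, and_iff_right_iff_imp]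
          rintro ⟨h1, h2⟩
          rw [h2]
          simp
        rw [ef]
        ring
      rw [e1, e2] at hsplit
      rw [sum_jc] at hsplit
      generalize hnb : n * b = nb at hsplit ⊢
      omega
    · -- type (0,2) count
      have hsplit := Finset.sum_filter_add_sum_filter_not S (fun J => Odd (kc J)) kc
      have e1 : ∑ J ∈ S.filter (fun J => Odd (kc J)), kc J = 2 * (n * a) := by
        rw [Finset.sum_congr rfl (fun J hJ => (hOba J (Finset.mem_filter.mp hJ).1
          (Finset.mem_filter.mp hJ).2).2), Finset.sum_const, hO, smul_eq_mul]
        ring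
      have e2 : ∑ J ∈ S.filter (fun J => ¬ Odd (kc J)), kc J
          = 2 * (S.filter (fun J => IsType J 0 2)).card := by
        have ec : ∀ J ∈ S.filter (fun J => ¬ Odd (kc J)),
            kc J = if IsType J 0 2 then 2 else 0 := by
          intro J hJ
          obtain ⟨hJS, hk⟩ := Finset.mem_filter.mp hJ
          rcases hEtype J hJS hk with ⟨h1, h2⟩ | ⟨h1, h2⟩
          · rw [if_neg, h2]
            rw [isType_iff]
            omega
          · rw [if_pos ((isType_iff J 0 2).mpr ⟨h1, h2⟩), h2]
        rw [Finset.sum_congr rfl ec, Finset.sum_ite, Finset.sum_const, Finset.sum_const,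
          smul_eq_mul, smul_eq_mul, Finset.filter_filter]
        have ef : S.filter (fun J => ¬ Odd (kc J) ∧ IsType J 0 2)
            = S.filter (fun J => IsType J 0 2) := by
          apply Finset.filter_congr
          intro J _
          simp only [isType_iff, iff_self_and, and_iff_right_iff_imp]
          rintro ⟨h1, h2⟩
          rw [h2]
          simp
        rw [ef]
        ring
      rw [e1, e2] at hsplit
      rw [sum_kc] at hsplit
      generalize hna : n * a = na at hsplit ⊢
      omega
  · -- counts imply equality
    rintro ⟨h1, h2, h3⟩
    set F1 := S.filter (fun J => IsType J b a) with hF1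
    set F2 := S.filter (fun J => IsType J 2 0) with hF2
    set F3 := S.filter (fun J => IsType J 0 2) with hF3
    have ha2 : a ≠ 2 := by
      rcases haodd with ⟨c, hc⟩
      omega
    have d12 : Disjoint F1 F2 := by
      rw [Finset.disjoint_left]
      intro J hJ1 hJ2
      simp only [hF1, hF2, Finset.mem_filter, isType_iff] at hJ1 hJ2
      omega
    have d13 : Disjoint F1 F3 := by
      rw [Finset.disjoint_left]
      intro J hJ1 hJ2
      simp only [hF1, hF3, Finset.mem_filter, isType_iff] at hJ1 hJ2
      omega
    have d23 : Disjoint F2 F3 := by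
      rw [Finset.disjoint_left]
      intro J hJ1 hJ2
      simp only [hF2, hF3, Finset.mem_filter, isType_iff] at hJ1 hJ2
      omega
    set T := F1 ∪ F2 ∪ F3 with hT
    have hTS : T ⊆ S := by
      apply Finset.union_subset
      apply Finset.union_subset
      exact Finset.filter_subset _ _
      exact Finset.filter_subset _ _
      exact Finset.filter_subset _ _
    have d123 : Disjoint (F1 ∪ F2) F3 := Finset.disjoint_union_left.mpr ⟨d13, d23⟩
    have hc1 : ∀ J ∈ F1, jc J + kc J = a + b := by
      intro J hJ
      have := (Finset.mem_filter.mp hJ).2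
      rw [isType_iff] at this
      omega
    have hc2 : ∀ J ∈ F2, jc J + kc J = 2 := by
      intro J hJ
      have := (Finset.mem_filter.mp hJ).2
      rw [isType_iff] at this
      omega
    have hc3 : ∀ J ∈ F3, jc J + kc J = 2 := by
      intro J hJ
      have := (Finset.mem_filter.mp hJ).2
      rw [isType_iff] at this
      omega
    have s1 : ∑ J ∈ F1, (jc J + kc J) = F1.card * (a + b) := by
      rw [Finset.sum_congr rfl hc1, Finset.sum_const, smul_eq_mul]
    have s2 : ∑ J ∈ F2, (jc J + kc J) = F2.card * 2 := by
      rw [Finset.sum_congr rfl hc2, Finset.sum_const, smul_eq_mul]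
    have s3 : ∑ J ∈ F3, (jc J + kc J) = F3.card * 2 := by
      rw [Finset.sum_congr rfl hc3, Finset.sum_const, smul_eq_mul]
    have hsumT : ∑ J ∈ T, (jc J + kc J) = 4 * p := by
      rw [hT, Finset.sum_union d123, Finset.sum_union d12, s1, s2, s3, h1]
      have hr : 2 * n * (a + b) = 2 * (n * a) + 2 * (n * b) := by ring
      rw [hr]
      generalize hna : n * a = na at h3 ⊢
      generalize hnb : n * b = nb at h2 ⊢
      omega
    have hrest : ∑ J ∈ S \ T, (jc J + kc J) = 0 := by
      have hsd : ∑ J ∈ S \ T, (jc J + kc J) + ∑ J ∈ T, (jc J + kc J)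
          = ∑ J ∈ S, (jc J + kc J) := Finset.sum_sdiff hTS
      omega
    have hST : S = T := by
      have hempty : S \ T = ∅ := by
        by_contra hne'
        obtain ⟨J, hJ⟩ := Finset.nonempty_of_ne_empty hne'
        have h0 : jc J + kc J = 0 := (Finset.sum_eq_zero_iff.mp hrest) J hJ
        have h1' := hne J (Finset.mem_sdiff.mp hJ).1
        omega
      exact Finset.Subset.antisymm (Finset.sdiff_eq_empty_iff_subset.mp hempty) hTS
    have hcard : S.card = F1.card + F2.card + F3.card := by
      rw [hST, hT, Finset.card_union_of_disjoint d123, Finset.card_union_of_disjoint d12]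
    rw [hcard, h1]
    generalize hna : n * a = na at h3 hsplit2
    generalize hnb : n * b = nb at h2 hsplit2
    generalize hA : n * (a + b) = A at hkeyid hsplit2
    generalize hq : n * (a + b - 2) = q at hkeyid ⊢
    omega
end
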